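/- arXiv:0901.2339 — 4 statements merged into one kernel-verified Lean document; each statement's English description precedes it below -/
import Mathlib

section
/- Let R be an ordered field and V a proper convex subring with maximal ideal m. If a₀, …, a_m ∈ Vⁿ, then the standard part of the convex hull [a₀,…,a_m] ⊆ Rⁿ equals the convex hull of st(a₀), …, st(a_m) in kⁿ, where st: Vⁿ → kⁿ is applied coordinatewise. -/
/-- The maximal ideal of a convex subring `V` of an ordered field. -/
def mSet {R : Type*} [Field R] [LinearOrder R] [IsStrictOrderedRing R] (V : Subring R) : Set R :=
  {x : R | x ∈ V ∧ (x = 0 ∨ x⁻¹ ∉ V)}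

/-!
If `x = ∑ wⱼ aⱼ` is a convex combination, the weights lie in `[0, 1] ⊆ V`, so `st` commutes with
the combination and sends the weights to convex weights in `k`. Conversely, lift convex weights
`cⱼ` of `k` to `tⱼ ≥ 0` in `V`; then `S = ∑ tⱼ` has standard part `1`, so `S - 1` is infinitesimal,
whence `S > 0` and `S⁻¹ ∈ V`, and `tⱼ / S` are convex weights in `R` with standard parts `cⱼ`.
-/

open Finset

theorem mem_convexHull_range_iff_exists_stdSimplex {𝕜 E ι : Type*} [Field 𝕜] [LinearOrder 𝕜]
    [IsStrictOrderedRing 𝕜] [AddCommGroup E] [Module 𝕜 E] [Fintype ι] {v : ι → E} {x : E} :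
    x ∈ convexHull 𝕜 (Set.range v) ↔ ∃ w ∈ stdSimplex 𝕜 ι, ∑ i, w i • v i = x := by
  classical
  constructor
  · rw [convexHull_range_eq_exists_affineCombination]
    rintro ⟨s, w, hw₀, hw₁, rfl⟩
    refine ⟨fun i => if i ∈ s then w i else 0, ⟨fun i => ?_, ?_⟩, ?_⟩
    · dsimp only
      split_ifs with hi
      exacts [hw₀ i hi, le_rfl]
    · rw [sum_ite_mem, univ_inter, hw₁]
    · simp only [ite_smul, zero_smul, sum_ite_mem, univ_inter,
        s.affineCombination_eq_linear_combination v w hw₁]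
  · rintro ⟨w, hw, rfl⟩
    exact mem_convexHull_of_exists_fintype w v hw.1 hw.2 Set.mem_range_self rfl

theorem map_sum_of_map_add {R K ι : Type*} [AddCommMonoid R] [AddCommGroup K]
    {V : AddSubmonoid R} {st : R → K} (hadd : ∀ x ∈ V, ∀ y ∈ V, st (x + y) = st x + st y)
    (s : Finset ι) {f : ι → R} (hf : ∀ i, f i ∈ V) :
    st (∑ i ∈ s, f i) = ∑ i ∈ s, st (f i) := by
  let φ : V →+ K := AddMonoidHom.mk' (fun x => st x) fun x y => hadd x x.2 y y.2
  simpa only [φ, AddMonoidHom.mk'_apply, AddSubmonoid.coe_finsetSum] using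
    map_sum φ (fun i => ⟨f i, hf i⟩) s

theorem map_zero_of_map_add {R K : Type*} [AddZeroClass R] [AddGroup K] {V : AddSubmonoid R}
    {st : R → K} (hadd : ∀ x ∈ V, ∀ y ∈ V, st (x + y) = st x + st y) : st 0 = 0 := by
  simpa using hadd 0 V.zero_mem 0 V.zero_mem

theorem map_sum_mul_of_map_add_of_map_mul {R K ι : Type*} [Ring R] [Ring K]
    {V : Subring R} {st : R → K} (hadd : ∀ x ∈ V, ∀ y ∈ V, st (x + y) = st x + st y)
    (hmul : ∀ x ∈ V, ∀ y ∈ V, st (x * y) = st x * st y)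
    (s : Finset ι) {f g : ι → R} (hf : ∀ i, f i ∈ V) (hg : ∀ i, g i ∈ V) :
    st (∑ i ∈ s, f i * g i) = ∑ i ∈ s, st (f i) * st (g i) := by
  rw [map_sum_of_map_add (V := V.toAddSubmonoid) hadd s fun i => V.mul_mem (hf i) (hg i)]
  exact sum_congr rfl fun i _ => hmul _ (hf i) _ (hg i)

theorem abs_lt_inv_of_mem_mSet {R : Type*} [Field R] [LinearOrder R] [IsStrictOrderedRing R]
    {V : Subring R} (hconv : ∀ x y : R, |x| ≤ |y| → y ∈ V → x ∈ V) {x r : R}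
    (hx : x ∈ mSet V) (hr : r ∈ V) (hr₀ : 0 < r) : |x| < r⁻¹ := by
  rcases hx.2 with rfl | hx_inv
  · simpa using hr₀
  · by_contra! h
    refine hx_inv (hconv _ r ?_ hr)
    rw [abs_inv, abs_of_pos hr₀]
    exact inv_le_of_inv_le₀ hr₀ h

theorem pos_and_inv_mem_of_map_eq_one {R K : Type*} [Field R] [LinearOrder R]
    [IsStrictOrderedRing R] [One K] {V : Subring R} {st : R → K}
    (hconv : ∀ x y : R, |x| ≤ |y| → y ∈ V → x ∈ V)
    (hker : ∀ x ∈ V, ∀ y ∈ V, (st x = st y ↔ x - y ∈ mSet V)) (hone : st 1 = 1)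
    {S : R} (hS : S ∈ V) (hst : st S = 1) : 0 < S ∧ S⁻¹ ∈ V := by
  have h₂ : (2 : R) ∈ V := ofNat_mem V 2
  have hclose : |S - 1| < 2⁻¹ :=
    abs_lt_inv_of_mem_mSet hconv ((hker S hS 1 V.one_mem).1 (hst.trans hone.symm)) h₂ two_pos
  have hS₂ : 2⁻¹ < S := by
    linarith [(abs_lt.1 hclose).1, show (2 : R)⁻¹ + 2⁻¹ = 1 by norm_num]
  have hS₀ : 0 < S := (inv_pos.2 two_pos).trans hS₂
  refine ⟨hS₀, hconv _ 2 ?_ h₂⟩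
  rw [abs_two, abs_of_pos (inv_pos.2 hS₀)]
  exact inv_le_of_inv_le₀ two_pos hS₂.le

theorem exists_nonneg_mem_map_eq {R K : Type*} [AddCommGroup R] [LinearOrder R]
    [IsOrderedAddMonoid R] [AddCommGroup K] [PartialOrder K] [IsOrderedAddMonoid K]
    {V : AddSubgroup R} {st : R → K} (hadd : ∀ x ∈ V, ∀ y ∈ V, st (x + y) = st x + st y)
    (hmono : ∀ x ∈ V, ∀ y ∈ V, x ≤ y → st x ≤ st y) (hsurj : ∀ c : K, ∃ x ∈ V, st x = c)
    {c : K} (hc : 0 ≤ c) : ∃ t ∈ V, 0 ≤ t ∧ st t = c := by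
  obtain ⟨t, ht, rfl⟩ := hsurj c
  rcases le_total 0 t with ht₀ | ht₀
  · exact ⟨t, ht, ht₀, rfl⟩
  have hst₀ : st 0 = 0 := map_zero_of_map_add (V := V.toAddSubmonoid) hadd
  have hzero : st t = 0 := le_antisymm (hst₀ ▸ hmono t ht 0 V.zero_mem ht₀) hc
  have hneg : st t + st (-t) = 0 := by rw [← hadd t ht _ (V.neg_mem ht), add_neg_cancel, hst₀]
  exact ⟨-t, V.neg_mem ht, neg_nonneg.2 ht₀, by rw [hzero] at hneg ⊢; simpa using hneg⟩

theorem map_sum_smul_of_map_add_of_map_mul {R K ι κ : Type*} [Ring R] [Ring K] {V : Subring R}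
    {st : R → K} (hadd : ∀ x ∈ V, ∀ y ∈ V, st (x + y) = st x + st y)
    (hmul : ∀ x ∈ V, ∀ y ∈ V, st (x * y) = st x * st y) (s : Finset ι) {w : ι → R}
    {a : ι → κ → R} (hw : ∀ j, w j ∈ V) (ha : ∀ j i, a j i ∈ V) :
    (fun i => st ((∑ j ∈ s, w j • a j) i)) = ∑ j ∈ s, st (w j) • fun i => st (a j i) := by
  funext i
  simp only [Finset.sum_apply, Pi.smul_apply, smul_eq_mul]
  exact map_sum_mul_of_map_add_of_map_mul hadd hmul s hw (fun j => ha j i)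

theorem mem_of_mem_stdSimplex {R ι : Type*} [Ring R] [LinearOrder R] [IsOrderedRing R]
    [Fintype ι] {V : Subring R} (hconv : ∀ x y : R, |x| ≤ |y| → y ∈ V → x ∈ V) {w : ι → R}
    (hw : w ∈ stdSimplex R ι) (j : ι) : w j ∈ V :=
  hconv _ 1 (by rw [abs_one, abs_of_nonneg (hw.1 j)]; exact (mem_Icc_of_mem_stdSimplex hw j).2)
    V.one_mem

theorem map_mem_stdSimplex {R K ι : Type*} [Ring R] [PartialOrder R] [Ring K] [PartialOrder K]
    [Fintype ι] {V : Subring R} {st : R → K}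
    (hadd : ∀ x ∈ V, ∀ y ∈ V, st (x + y) = st x + st y) (hone : st 1 = 1)
    (hmono : ∀ x ∈ V, ∀ y ∈ V, x ≤ y → st x ≤ st y) {w : ι → R} (hwV : ∀ j, w j ∈ V)
    (hw : w ∈ stdSimplex R ι) : (fun j => st (w j)) ∈ stdSimplex K ι := by
  refine ⟨fun j => ?_, ?_⟩
  · simpa [map_zero_of_map_add (V := V.toAddSubmonoid) hadd] using
      hmono 0 V.zero_mem (w j) (hwV j) (hw.1 j)
  · rw [← map_sum_of_map_add (V := V.toAddSubmonoid) hadd _ hwV, hw.2, hone]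

theorem exists_mem_stdSimplex_map_eq {R K ι : Type*} [Field R] [LinearOrder R]
    [IsStrictOrderedRing R] [Ring K] [PartialOrder K] [IsOrderedRing K] [Fintype ι]
    {V : Subring R} {st : R → K} (hconv : ∀ x y : R, |x| ≤ |y| → y ∈ V → x ∈ V)
    (hker : ∀ x ∈ V, ∀ y ∈ V, (st x = st y ↔ x - y ∈ mSet V))
    (hadd : ∀ x ∈ V, ∀ y ∈ V, st (x + y) = st x + st y)
    (hmul : ∀ x ∈ V, ∀ y ∈ V, st (x * y) = st x * st y) (hone : st 1 = 1)
    (hmono : ∀ x ∈ V, ∀ y ∈ V, x ≤ y → st x ≤ st y) (hsurj : ∀ c : K, ∃ x ∈ V, st x = c)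
    {c : ι → K} (hc : c ∈ stdSimplex K ι) :
    ∃ w ∈ stdSimplex R ι, (∀ j, w j ∈ V) ∧ ∀ j, st (w j) = c j := by
  choose t htV ht₀ hst using fun j =>
    exists_nonneg_mem_map_eq (V := V.toAddSubgroup) hadd hmono hsurj (hc.1 j)
  set S := ∑ j, t j
  have hSV : S ∈ V := V.sum_mem fun j _ => htV j
  have hstS : st S = 1 := by
    rw [map_sum_of_map_add (V := V.toAddSubmonoid) hadd _ htV]
    simpa only [hst] using hc.2
  obtain ⟨hS₀, hS_inv⟩ := pos_and_inv_mem_of_map_eq_one hconv hker hone hSV hstS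
  have hst_inv : st S⁻¹ = 1 := by
    simpa [hstS, mul_inv_cancel₀ hS₀.ne', hone] using (hmul S hSV _ hS_inv).symm
  refine ⟨fun j => t j * S⁻¹, ⟨fun j => mul_nonneg (ht₀ j) (inv_nonneg.2 hS₀.le), ?_⟩,
    fun j => V.mul_mem (htV j) hS_inv, fun j => ?_⟩
  · rw [← sum_mul, mul_inv_cancel₀ hS₀.ne']
  · rw [hmul _ (htV j) _ hS_inv, hst, hst_inv, mul_one]

theorem stmt1_general {R kk : Type*} [Field R] [LinearOrder R] [IsStrictOrderedRing R]
    [Field kk] [LinearOrder kk] [IsStrictOrderedRing kk]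
    (V : Subring R)
    (hconv : ∀ x y : R, |x| ≤ |y| → y ∈ V → x ∈ V)
    (st : R → kk)
    (hker : ∀ x ∈ V, ∀ y ∈ V, (st x = st y ↔ x - y ∈ mSet V))
    (hadd : ∀ x ∈ V, ∀ y ∈ V, st (x + y) = st x + st y)
    (hmul : ∀ x ∈ V, ∀ y ∈ V, st (x * y) = st x * st y)
    (hone : st 1 = 1)
    (hmono : ∀ x ∈ V, ∀ y ∈ V, x ≤ y → st x ≤ st y)
    (hsurj : ∀ c : kk, ∃ x ∈ V, st x = c)
    (n m : ℕ) (a : Fin (m + 1) → (Fin n → R)) (ha : ∀ j i, a j i ∈ V) :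
    (fun x : Fin n → R => fun i => st (x i)) ''
        ((convexHull R (Set.range a)) ∩ {x : Fin n → R | ∀ i, x i ∈ V})
      = convexHull kk (Set.range (fun j => fun i => st (a j i))) := by
  apply Set.Subset.antisymm
  · rintro _ ⟨x, ⟨hx, -⟩, rfl⟩
    obtain ⟨w, hw, rfl⟩ := mem_convexHull_range_iff_exists_stdSimplex.1 hx
    have hwV := mem_of_mem_stdSimplex hconv hw
    dsimp only
    rw [map_sum_smul_of_map_add_of_map_mul hadd hmul _ hwV ha]
    exact mem_convexHull_range_iff_exists_stdSimplex.2
      ⟨_, map_mem_stdSimplex hadd hone hmono hwV hw, rfl⟩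
  · intro y hy
    obtain ⟨c, hc, rfl⟩ := mem_convexHull_range_iff_exists_stdSimplex.1 hy
    obtain ⟨w, hw, hwV, hwc⟩ :=
      exists_mem_stdSimplex_map_eq hconv hker hadd hmul hone hmono hsurj hc
    refine ⟨∑ j, w j • a j,
      ⟨mem_convexHull_range_iff_exists_stdSimplex.2 ⟨w, hw, rfl⟩, fun i => ?_⟩, ?_⟩
    · simp only [Finset.sum_apply, Pi.smul_apply, smul_eq_mul]
      exact V.sum_mem fun j _ => V.mul_mem (hwV j) (ha j i)
    · dsimp only
      rw [map_sum_smul_of_map_add_of_map_mul hadd hmul _ hwV ha]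
      simp only [hwc]

theorem stmt1 {R kk : Type*} [Field R] [LinearOrder R] [IsStrictOrderedRing R]
    [Field kk] [LinearOrder kk] [IsStrictOrderedRing kk]
    (V : Subring R)
    (hconv : ∀ x y : R, |x| ≤ |y| → y ∈ V → x ∈ V)
    (hproper : (V : Set R) ≠ Set.univ)
    (st : R → kk)
    (hker : ∀ x ∈ V, ∀ y ∈ V, (st x = st y ↔ x - y ∈ mSet V))
    (hadd : ∀ x ∈ V, ∀ y ∈ V, st (x + y) = st x + st y)
    (hmul : ∀ x ∈ V, ∀ y ∈ V, st (x * y) = st x * st y)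
    (hone : st 1 = 1)
    (hmono : ∀ x ∈ V, ∀ y ∈ V, x ≤ y → st x ≤ st y)
    (hsurj : ∀ c : kk, ∃ x ∈ V, st x = c)
    (n m : ℕ) (a : Fin (m + 1) → (Fin n → R)) (ha : ∀ j i, a j i ∈ V) :
    (fun x : Fin n → R => fun i => st (x i)) ''
        ((convexHull R (Set.range a)) ∩ {x : Fin n → R | ∀ i, x i ∈ V})
      = convexHull kk (Set.range (fun j => fun i => st (a j i))) :=
  stmt1_general V hconv st hker hadd hmul hone hmono hsurj n m a ha
end

section
/- Let a₀,…,a_m ∈ kⁿ be a simplicial sequence with witnessing indices i₀ < ⋯ < i_k, and let r_i ≤ s_i in k (i = 0,…,m) be constant on each block [i_κ, i_{κ+1}) (i.e., r_i = r_{i_κ} and s_i = s_{i_κ} for i_κ ≤ i < i_{κ+1}). Set b_i = (a_i, r_i) and c_i = (a_i, s_i) in k^{n+1}. Then for any 0 ≤ j₀ < ⋯ < j_p ≤ j_{p+1} < ⋯ < j_q ≤ m with p < q, the sequence b_{j₀},…,b_{j_p}, c_{j_{p+1}},…,c_{j_q} is simplicial. -/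
/-!
Through the block index `β` of `a`, the new sequence becomes `i ↦ (A (γ i), R (γ i) or S (γ i))`
with `A = a ∘ ι` affinely independent and `γ = β ∘ d` monotone. A sequence is simplicial as soon
as it never returns to a value it has left and its set of values is affinely independent. With
`κ₀ = γ p`, every value is either `(A κ₀, R κ₀)` or a lift `(A κ, x κ)` of a vertex, where `x κ`
is `R κ` for `κ < κ₀` and `S κ` otherwise. Lifts of affinely independent points stay affinely
independent, and `(A κ₀, R κ₀)`, unless it equals `(A κ₀, S κ₀)`, is off the affine span of the
lifts, because projecting an affine combination of them onto `A κ₀` forces all the weight onto `κ₀`.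
-/

def IsSimplicialWith {K : Type*} [Field K] [LinearOrder K] [IsStrictOrderedRing K] {n m k : ℕ}
    (a : Fin (m + 1) → (Fin n → K)) (ι : Fin (k + 1) → Fin (m + 1)) : Prop :=
  StrictMono ι ∧ ι 0 = 0 ∧ AffineIndependent K (a ∘ ι) ∧
    ∀ (κ : Fin (k + 1)) (i : Fin (m + 1)), ι κ ≤ i →
      (∀ κ' : Fin (k + 1), κ < κ' → i < ι κ') → a i = a (ι κ)

def IsSimplicialSeq {K : Type*} [Field K] [LinearOrder K] [IsStrictOrderedRing K] {n m : ℕ}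
    (a : Fin (m + 1) → (Fin n → K)) : Prop :=
  ∃ (k : ℕ) (ι : Fin (k + 1) → Fin (m + 1)), IsSimplicialWith a ι

open Finset

theorem AffineIndependent.insert_of_notMem_affineSpan {k V P : Type*} [DivisionRing k]
    [AddCommGroup V] [Module k V] [AddTorsor V P] {s : Set P} {x : P}
    (hs : AffineIndependent k ((↑) : s → P)) (hx : x ∉ affineSpan k s) :
    AffineIndependent k ((↑) : ↥(insert x s) → P) := by
  let x' : ↥(insert x s) := ⟨x, s.mem_insert x⟩
  have hmem : ∀ y : {y // y ≠ x'}, (y : P) ∈ s :=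
    fun ⟨⟨y, hy⟩, hne⟩ => hy.resolve_left fun h => hne (Subtype.ext h)
  let f : {y // y ≠ x'} ↪ s := ⟨fun y => ⟨y, hmem y⟩, fun y z h => by
    simpa [Subtype.ext_iff] using h⟩
  refine AffineIndependent.affineIndependent_of_notMem_span (i := x') ?_ ?_
  · exact hs.comp_embedding f
  · refine fun h => hx (affineSpan_mono k ?_ h)
    rintro _ ⟨y, hy, rfl⟩
    exact hmem ⟨y, hy⟩

section Snoc

variable {K ι : Type*} [Field K] {n : ℕ}

theorem AffineIndependent.snoc {A : ι → Fin n → K} (hA : AffineIndependent K A) (x : ι → K) :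
    AffineIndependent K fun i => (Fin.snoc (A i) (x i) : Fin (n + 1) → K) :=
  .of_comp (LinearMap.funLeft K K Fin.castSucc).toAffineMap <| by
    have : (LinearMap.funLeft K K Fin.castSucc).toAffineMap ∘
        (fun i => (Fin.snoc (A i) (x i) : Fin (n + 1) → K)) = A := by
      ext i j
      simp [LinearMap.funLeft]
    rwa [this]

theorem snoc_notMem_affineSpan_range_snoc [Fintype ι] {A : ι → Fin n → K}
    (hA : AffineIndependent K A) (x : ι → K) {i₀ : ι} {y : K} (hy : y ≠ x i₀) :
    (Fin.snoc (A i₀) y : Fin (n + 1) → K) ∉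
      affineSpan K (Set.range fun i => (Fin.snoc (A i) (x i) : Fin (n + 1) → K)) := by
  classical
  intro hmem
  obtain ⟨w, hw, hcomb⟩ := eq_affineCombination_of_mem_affineSpan_of_fintype hmem
  rw [affineCombination_eq_linear_combination _ _ _ hw] at hcomb
  have hsingle : ∑ i, (Pi.single i₀ 1 : ι → K) i • A i = A i₀ := by
    simp [Pi.single_apply, ite_smul]
  have hproj : ∑ i, w i • A i = ∑ i, (Pi.single i₀ 1 : ι → K) i • A i := by
    rw [hsingle]
    ext j
    simpa [Finset.sum_apply] using (congrFun hcomb j.castSucc).symm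
  have hw₀ : w = (Pi.single i₀ 1 : ι → K) := funext fun i =>
    hA.eq_of_sum_eq_sum (by simp [hw]) hproj i (mem_univ i)
  have hlast : y = ∑ i, w i * x i := by
    simpa [Finset.sum_apply] using congrFun hcomb (Fin.last n)
  exact hy (by simp [hlast, hw₀, Pi.single_apply])

end Snoc

theorem exists_monotone_blockIndex {α : Type*} [LinearOrder α] {k : ℕ} (ι : Fin (k + 1) → α)
    (hι : ∀ i, ι 0 ≤ i) :
    ∃ β : α → Fin (k + 1), Monotone β ∧ ∀ i, ι (β i) ≤ i ∧ ∀ κ, β i < κ → i < ι κ := by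
  classical
  have hblock (i : α) : ∃ κ, ι κ ≤ i ∧ ∀ κ', κ < κ' → i < ι κ' := by
    obtain ⟨κ, hκ, hmax⟩ := (univ.filter (ι · ≤ i)).exists_max_image id ⟨0, by simpa using hι i⟩
    refine ⟨κ, (mem_filter.1 hκ).2, fun κ' hκ' => not_le.1 fun hle => ?_⟩
    exact not_lt_of_ge (hmax κ' (by simpa using hle)) hκ'
  choose β hβ using hblock
  exact ⟨β, fun i j hij => not_lt.1 fun hlt =>
    not_le_of_gt ((hβ j).2 _ hlt) ((hβ i).1.trans hij), hβ⟩

section Simplicial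

variable {K : Type*} [Field K] [LinearOrder K] [IsStrictOrderedRing K] {n q : ℕ}

theorem isSimplicialSeq_of_affineIndependent_range (e : Fin (q + 1) → Fin n → K)
    (hconvex : ∀ i j l, i ≤ j → j ≤ l → e i = e l → e j = e i)
    (hind : AffineIndependent K ((↑) : Set.range e → Fin n → K)) :
    IsSimplicialSeq e := by
  classical
  -- the blocks start at the first occurrences of the values of `e`
  set F := univ.filter fun i => ∀ j < i, e j ≠ e i
  have hF0 : 0 ∈ F := by simp [F]
  have hfirst (i : Fin (q + 1)) : ∃ j ∈ F, j ≤ i ∧ e j = e i := by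
    obtain ⟨j, hj, hmin⟩ := (univ.filter (e · = e i)).exists_min_image id ⟨i, by simp⟩
    have hj' := (mem_filter.1 hj).2
    refine ⟨j, mem_filter.2 ⟨mem_univ j, fun j' hj'j he => ?_⟩, hmin i (by simp), hj'⟩
    exact not_lt_of_ge (hmin j' (by simp [he, hj'])) hj'j
  have hinj : Set.InjOn e F := by
    intro i hi j hj he
    by_contra hne
    rcases lt_or_gt_of_ne hne with h | h
    · exact (mem_filter.1 hj).2 i h he
    · exact (mem_filter.1 hi).2 j h he.symm
  have hcard : F.card = F.card - 1 + 1 := (Nat.succ_pred_eq_of_pos (card_pos.2 ⟨0, hF0⟩)).symm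
  set ι' := F.orderEmbOfFin hcard
  refine ⟨_, ι', ι'.strictMono, ?_, ?_, ?_⟩
  · rw [Fin.zero_eta.symm, orderEmbOfFin_zero hcard (Nat.succ_pos _)]
    exact le_antisymm (min'_le F 0 hF0) (Fin.zero_le _)
  · refine AffineIndependent.of_set_of_injective (hind.mono ?_) ?_
    · exact Set.range_comp_subset_range ι' e
    · exact fun κ κ' h =>
        ι'.injective (hinj (orderEmbOfFin_mem F hcard κ) (orderEmbOfFin_mem F hcard κ') h)
  · intro κ i hκi hlt
    obtain ⟨j, hjF, hji, hje⟩ := hfirst i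
    obtain ⟨κ', rfl⟩ : j ∈ Set.range ι' := by simpa [ι', range_orderEmbOfFin] using hjF
    have hκ' : κ' ≤ κ := not_lt.1 fun h => not_le_of_gt (hlt κ' h) hji
    rw [← hje, hconvex _ _ _ (ι'.monotone hκ') hκi hje]

theorem isSimplicialSeq_snoc_of_monotone {k : ℕ} {A : Fin (k + 1) → Fin n → K}
    (hA : AffineIndependent K A) (R S : Fin (k + 1) → K) {γ : Fin (q + 1) → Fin (k + 1)}
    (hγ : Monotone γ) {p : ℕ} (hpq : p < q) :
    IsSimplicialSeq fun i : Fin (q + 1) =>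
      (Fin.snoc (A (γ i)) (if (i : ℕ) ≤ p then R (γ i) else S (γ i)) : Fin (n + 1) → K) := by
  set e := fun i : Fin (q + 1) =>
    (Fin.snoc (A (γ i)) (if (i : ℕ) ≤ p then R (γ i) else S (γ i)) : Fin (n + 1) → K)
  refine isSimplicialSeq_of_affineIndependent_range e ?_ ?_
  · intro i j l hij hjl hil
    have hγil : γ i = γ l := hA.injective (by simpa [e] using congrArg Fin.init hil)
    have hγj : γ j = γ i := le_antisymm (hγil ▸ hγ hjl) (hγ hij)
    by_cases hjp : (j : ℕ) ≤ p
    · have hip : (i : ℕ) ≤ p := (Fin.le_iff_val_le_val.1 hij).trans hjp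
      simp [e, hγj, hjp, hip]
    · have hlp : ¬(l : ℕ) ≤ p := fun h => hjp ((Fin.le_iff_val_le_val.1 hjl).trans h)
      rw [hil]
      simp [e, hγj, hγil, hjp, hlp]
  · set i₀ : Fin (q + 1) := ⟨p, by omega⟩
    set x := fun κ => if κ < γ i₀ then R κ else S κ
    have hsub : Set.range e ⊆ insert (Fin.snoc (A (γ i₀)) (R (γ i₀)))
        (Set.range fun κ => (Fin.snoc (A κ) (x κ) : Fin (n + 1) → K)) := by
      rintro _ ⟨i, rfl⟩
      by_cases hip : (i : ℕ) ≤ p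
      · rcases (hγ (show i ≤ i₀ from hip)).lt_or_eq with hlt | heq
        · exact Or.inr ⟨γ i, by simp [e, x, hip, hlt]⟩
        · exact Or.inl (by simp [e, hip, heq])
      · have hle : γ i₀ ≤ γ i := hγ (show i₀ ≤ i by simp [Fin.le_iff_val_le_val, i₀]; omega)
        exact Or.inr ⟨γ i, by simp [e, x, hip, not_lt.2 hle]⟩
    refine AffineIndependent.mono ?_ hsub
    have hQ := (hA.snoc x).range
    by_cases hRS : R (γ i₀) = S (γ i₀)
    · rwa [Set.insert_eq_of_mem (Set.mem_range.2 ⟨γ i₀, by simp [x, hRS]⟩)]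
    · exact hQ.insert_of_notMem_affineSpan
        (snoc_notMem_affineSpan_range_snoc hA x (by simpa [x] using hRS))

end Simplicial

theorem stmt9_general {K : Type*} [Field K] [LinearOrder K] [IsStrictOrderedRing K] {n m k : ℕ}
    (a : Fin (m + 1) → (Fin n → K)) (ι : Fin (k + 1) → Fin (m + 1))
    (h : IsSimplicialWith a ι)
    (r s : Fin (m + 1) → K)
    -- r and s are constant on each block [ι κ, ι (κ+1))
    (hrblock : ∀ (κ : Fin (k + 1)) (i : Fin (m + 1)), ι κ ≤ i →
      (∀ κ' : Fin (k + 1), κ < κ' → i < ι κ') → r i = r (ι κ) ∧ s i = s (ι κ))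
    -- b_i = (a_i, r_i),  c_i = (a_i, s_i) in K^{n+1}
    (b c : Fin (m + 1) → (Fin (n + 1) → K))
    (hb : ∀ i, b i = Fin.snoc (a i) (r i)) (hc : ∀ i, c i = Fin.snoc (a i) (s i))
    -- indices 0 ≤ j₀ < ⋯ < j_p ≤ j_{p+1} < ⋯ < j_q ≤ m
    (p q : ℕ) (hpq : p < q) (d : Fin (q + 1) → Fin (m + 1))
    (hmono : ∀ i j : Fin (q + 1), i < j → d i ≤ d j) :
    -- the sequence b_{j₀},…,b_{j_p}, c_{j_{p+1}},…,c_{j_q} is simplicial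
    IsSimplicialSeq (fun i : Fin (q + 1) => if (i : ℕ) ≤ p then b (d i) else c (d i)) := by
  obtain ⟨-, hι0, hA, ha⟩ := h
  obtain ⟨β, hβ, hblock⟩ := exists_monotone_blockIndex ι fun i => hι0 ▸ Fin.zero_le i
  have hseq : (fun i : Fin (q + 1) => if (i : ℕ) ≤ p then b (d i) else c (d i)) =
      fun i => Fin.snoc (a (ι (β (d i))))
        (if (i : ℕ) ≤ p then r (ι (β (d i))) else s (ι (β (d i)))) := by
    funext i
    obtain ⟨hstart, hend⟩ := hblock (d i)
    obtain ⟨hr, hs⟩ := hrblock _ _ hstart hend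
    split_ifs <;> simp [hb, hc, ha _ _ hstart hend, hr, hs]
  rw [hseq]
  exact isSimplicialSeq_snoc_of_monotone hA (r ∘ ι) (s ∘ ι)
    (hβ.comp (monotone_iff_forall_lt.2 hmono)) hpq

theorem stmt9 {K : Type*} [Field K] [LinearOrder K] [IsStrictOrderedRing K] {n m k : ℕ}
    (a : Fin (m + 1) → (Fin n → K)) (ι : Fin (k + 1) → Fin (m + 1))
    (h : IsSimplicialWith a ι)
    (r s : Fin (m + 1) → K) (hrs : ∀ i, r i ≤ s i)
    -- r and s are constant on each block [ι κ, ι (κ+1))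
    (hrblock : ∀ (κ : Fin (k + 1)) (i : Fin (m + 1)), ι κ ≤ i →
      (∀ κ' : Fin (k + 1), κ < κ' → i < ι κ') → r i = r (ι κ) ∧ s i = s (ι κ))
    -- b_i = (a_i, r_i),  c_i = (a_i, s_i) in K^{n+1}
    (b c : Fin (m + 1) → (Fin (n + 1) → K))
    (hb : ∀ i, b i = Fin.snoc (a i) (r i)) (hc : ∀ i, c i = Fin.snoc (a i) (s i))
    -- indices 0 ≤ j₀ < ⋯ < j_p ≤ j_{p+1} < ⋯ < j_q ≤ m
    (p q : ℕ) (hpq : p < q) (d : Fin (q + 1) → Fin (m + 1))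
    (hmono : ∀ i j : Fin (q + 1), i < j → d i ≤ d j)
    (hstrict₁ : ∀ i j : Fin (q + 1), i < j → (j : ℕ) ≤ p → d i < d j)
    (hstrict₂ : ∀ i j : Fin (q + 1), i < j → p + 1 ≤ (i : ℕ) → d i < d j) :
    -- the sequence b_{j₀},…,b_{j_p}, c_{j_{p+1}},…,c_{j_q} is simplicial
    IsSimplicialSeq (fun i : Fin (q + 1) => if (i : ℕ) ≤ p then b (d i) else c (d i)) :=
  stmt9_general a ι h r s hrblock b c hb hc p q hpq d hmono
end

section
/- Let R be an ordered field, V a proper convex subring with residue map st, and let S ⊆ Rⁿ be an m-simplex with vertices in Vⁿ. Then S is a V-simplex (i.e., the standard parts of the faces of S form a complex in kⁿ) if and only if there is an enumeration a₀,…,a_m of the vertices of S such that the sequence st(a₀),…,st(a_m) in kⁿ is simplicial. -/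
/-- `S` is a simplex: the convex hull of affinely independent points. -/
def IsSimplexSet {K : Type*} [Field K] [LinearOrder K] [IsStrictOrderedRing K] {n : ℕ} (S : Set (Fin n → K)) : Prop :=
  ∃ (m : ℕ) (a : Fin (m + 1) → (Fin n → K)),
    AffineIndependent K a ∧ S = convexHull K (Set.range a)

/-- `F` is a face of the simplex `S`: the convex hull of a nonempty subset of its vertices. -/
def IsFaceOf {K : Type*} [Field K] [LinearOrder K] [IsStrictOrderedRing K] {n : ℕ} (F S : Set (Fin n → K)) : Prop :=
  ∃ (m : ℕ) (a : Fin (m + 1) → (Fin n → K)), AffineIndependent K a ∧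
    S = convexHull K (Set.range a) ∧
    ∃ T : Finset (Fin (m + 1)), T.Nonempty ∧ F = convexHull K (a '' ↑T)

/-- A complex: a finite collection of simplexes closed under faces such that any two
members meeting do so in a common face. -/
def IsComplexCol {K : Type*} [Field K] [LinearOrder K] [IsStrictOrderedRing K] {n : ℕ}
    (𝒦 : Set (Set (Fin n → K))) : Prop :=
  𝒦.Finite ∧ (∀ S ∈ 𝒦, IsSimplexSet S) ∧
    (∀ S ∈ 𝒦, ∀ F, IsFaceOf F S → F ∈ 𝒦) ∧
    (∀ S ∈ 𝒦, ∀ S' ∈ 𝒦, (S ∩ S').Nonempty →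
      IsFaceOf (S ∩ S') S ∧ IsFaceOf (S ∩ S') S')

/-- The standard part of a subset of `Rⁿ`: the image under the coordinatewise
residue map of its intersection with `Vⁿ`. -/
def stSet {R kk : Type*} [Field R] [LinearOrder R] [IsStrictOrderedRing R] [Field kk] [LinearOrder kk] [IsStrictOrderedRing kk]
    (V : Subring R) (st : R → kk) {n : ℕ} (X : Set (Fin n → R)) : Set (Fin n → kk) :=
  (fun x : Fin n → R => fun i => st (x i)) '' (X ∩ {x | ∀ i, x i ∈ V})

open Set

section ExtremePoints

variable {K E : Type*} [Field K] [LinearOrder K] [IsStrictOrderedRing K] [AddCommGroup E]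
  [Module K E]

theorem mem_extremePoints_convexHull_insert {x : E} {t : Set E} (hx : x ∉ convexHull K t) :
    x ∈ (convexHull K (insert x t)).extremePoints K := by
  rcases t.eq_empty_or_nonempty with rfl | ht
  · simp
  rw [mem_extremePoints_iff_left, convexHull_insert ht]
  refine ⟨subset_convexJoin_left ht.convexHull (mem_singleton x), ?_⟩
  rintro x₁ hx₁ x₂ hx₂ ⟨θ₁, θ₂, hθ₁, hθ₂, hθ, hx12⟩
  obtain ⟨z₁, hz₁, y₁, hy₁, a₁, b₁, ha₁, hb₁, hab₁, rfl⟩ := mem_convexJoin.1 hx₁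
  obtain ⟨z₂, hz₂, y₂, hy₂, a₂, b₂, ha₂, hb₂, hab₂, rfl⟩ := mem_convexJoin.1 hx₂
  rw [mem_singleton_iff] at hz₁ hz₂
  subst z₁ z₂
  obtain rfl | hb₁pos := hb₁.eq_or_lt
  · obtain rfl : a₁ = 1 := by simpa using hab₁
    simp
  obtain rfl : a₁ = 1 - b₁ := eq_sub_of_add_eq hab₁
  obtain rfl : a₂ = 1 - b₂ := eq_sub_of_add_eq hab₂
  obtain rfl : θ₂ = 1 - θ₁ := eq_sub_of_add_eq' hθ
  set S := θ₁ * b₁ + (1 - θ₁) * b₂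
  have hS : 0 < S := add_pos_of_pos_of_nonneg (mul_pos hθ₁ hb₁pos) (mul_nonneg hθ₂.le hb₂)
  -- unless `x₁ = x`, solving for `x` makes it a convex combination of `y₁, y₂ ∈ convexHull K t`
  have key : S • x = (θ₁ * b₁) • y₁ + ((1 - θ₁) * b₂) • y₂ := by
    calc S • x = S • x + (θ₁ • ((1 - b₁) • x + b₁ • y₁)
          + (1 - θ₁) • ((1 - b₂) • x + b₂ • y₂) - x) := by rw [hx12, sub_self, add_zero]
      _ = _ := by module
  refine absurd ?_ hx
  have hxy : x = (θ₁ * b₁ / S) • y₁ + ((1 - θ₁) * b₂ / S) • y₂ := by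
    calc x = S⁻¹ • (S • x) := (inv_smul_smul₀ hS.ne' x).symm
      _ = _ := by rw [key]; module
  rw [hxy]
  exact convex_convexHull K t hy₁ hy₂ (by positivity) (by positivity)
    (by rw [← add_div, div_self hS.ne'])

theorem AffineIndependent.extremePoints_convexHull_range {ι : Type*} {p : ι → E}
    (hp : AffineIndependent K p) : (convexHull K (range p)).extremePoints K = range p := by
  refine extremePoints_convexHull_subset.antisymm ?_
  rintro _ ⟨i, rfl⟩
  have hi : p i ∉ convexHull K (p '' {i}ᶜ) := fun h => hp.notMem_affineSpan_sdiff i univ <| by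
    simpa [compl_eq_univ_sdiff] using convexHull_subset_affineSpan _ h
  simpa [insert_image_compl_eq_range] using mem_extremePoints_convexHull_insert hi

end ExtremePoints

theorem exists_finset_image_eq_of_subset_range {ι α : Type*} [Finite ι] {b : ι → α} {Q : Set α}
    (hQ : Q ⊆ range b) : ∃ T : Finset ι, b '' ↑T = Q :=
  ⟨(toFinite (b ⁻¹' Q)).toFinset, by rw [Finite.coe_toFinset, image_preimage_eq_of_subset hQ]⟩

theorem AffineIndependent.exists_fin_range_eq {k E : Type*} [Ring k] [AddCommGroup E] [Module k E]
    {s : Set E} (hs : AffineIndependent k ((↑) : s → E)) (hfin : s.Finite) (hne : s.Nonempty) :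
    ∃ (m : ℕ) (a : Fin (m + 1) → E), AffineIndependent k a ∧ range a = s := by
  have := hfin.to_subtype
  obtain ⟨N, ⟨e⟩⟩ := Finite.exists_equiv_fin s
  obtain ⟨m, rfl⟩ : ∃ m, N = m + 1 :=
    Nat.exists_eq_succ_of_ne_zero fun h => (h ▸ e ⟨_, hne.some_mem⟩).elim0
  refine ⟨m, (↑) ∘ e.symm, hs.comp_embedding e.symm.toEmbedding, ?_⟩
  rw [range_comp, e.symm.range_eq_univ, image_univ, Subtype.range_coe]

def subsetHulls (k : Type*) {E : Type*} [Semiring k] [PartialOrder k] [AddCommMonoid E] [Module k E]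
    (s : Set E) : Set (Set E) :=
  {Z | ∃ P ⊆ s, P.Nonempty ∧ Z = convexHull k P}

theorem setOf_convexHull_image_eq_subsetHulls {k E ι : Type*} [Semiring k] [PartialOrder k]
    [AddCommMonoid E] [Module k E] [Finite ι] (b : ι → E) :
    {Z | ∃ T : Finset ι, T.Nonempty ∧ Z = convexHull k (b '' ↑T)} = subsetHulls k (range b) := by
  ext Z
  constructor
  · rintro ⟨T, hT, rfl⟩
    exact ⟨b '' T, image_subset_range b T, (Finset.coe_nonempty.2 hT).image b, rfl⟩
  · rintro ⟨P, hP, hPne, rfl⟩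
    obtain ⟨T, rfl⟩ := exists_finset_image_eq_of_subset_range hP
    exact ⟨T, Finset.coe_nonempty.1 hPne.of_image, rfl⟩

section Complexes

variable {K : Type*} [Field K] [LinearOrder K] [IsStrictOrderedRing K] {n : ℕ}

theorem IsFaceOf.exists_subset_extremePoints {F S : Set (Fin n → K)} (h : IsFaceOf F S) :
    ∃ P ⊆ S.extremePoints K, P.Nonempty ∧ F = convexHull K P := by
  obtain ⟨m, a, ha, rfl, T, hT, rfl⟩ := h
  rw [ha.extremePoints_convexHull_range]
  exact ⟨a '' T, image_subset_range a T, (Finset.coe_nonempty.2 hT).image a, rfl⟩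

theorem isFaceOf_convexHull_of_subset {P Q : Set (Fin n → K)}
    (hP : AffineIndependent K ((↑) : P → Fin n → K)) (hfin : P.Finite) (hQP : Q ⊆ P)
    (hQ : Q.Nonempty) : IsFaceOf (convexHull K Q) (convexHull K P) := by
  obtain ⟨m, a, ha, rfl⟩ := hP.exists_fin_range_eq hfin (hQ.mono hQP)
  obtain ⟨T, rfl⟩ := exists_finset_image_eq_of_subset_range hQP
  exact ⟨m, a, ha, rfl, T, Finset.coe_nonempty.1 hQ.of_image, rfl⟩

theorem AffineIndependent.convexHull_inter_of_finite {s t₁ t₂ : Set (Fin n → K)}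
    (hs : AffineIndependent K ((↑) : s → Fin n → K)) (hfin : s.Finite) (h₁ : t₁ ⊆ s)
    (h₂ : t₂ ⊆ s) : convexHull K (t₁ ∩ t₂) = convexHull K t₁ ∩ convexHull K t₂ := by
  classical
  lift s to Finset (Fin n → K) using hfin
  lift t₁ to Finset (Fin n → K) using s.finite_toSet.subset h₁
  lift t₂ to Finset (Fin n → K) using s.finite_toSet.subset h₂
  exact hs.convexHull_inter (Finset.coe_subset.1 h₁) (Finset.coe_subset.1 h₂)

theorem isComplexCol_subsetHulls {s : Set (Fin n → K)}
    (hs : AffineIndependent K ((↑) : s → Fin n → K)) (hfin : s.Finite) :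
    IsComplexCol (subsetHulls K s) := by
  refine ⟨?_, ?_, ?_, ?_⟩
  · refine (hfin.finite_subsets.image (convexHull K)).subset ?_
    rintro _ ⟨P, hP, -, rfl⟩
    exact ⟨P, hP, rfl⟩
  · rintro _ ⟨P, hP, hPne, rfl⟩
    obtain ⟨m, a, ha, hrange⟩ := (hs.mono hP).exists_fin_range_eq (hfin.subset hP) hPne
    exact ⟨m, a, ha, by rw [hrange]⟩
  · rintro _ ⟨P, hP, -, rfl⟩ F hF
    obtain ⟨Q, hQ, hQne, rfl⟩ := hF.exists_subset_extremePoints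
    exact ⟨Q, hQ.trans (extremePoints_convexHull_subset.trans hP), hQne, rfl⟩
  · rintro _ ⟨P₁, hP₁, -, rfl⟩ _ ⟨P₂, hP₂, -, rfl⟩ hne
    rw [← hs.convexHull_inter_of_finite hfin hP₁ hP₂] at hne ⊢
    have hne' := convexHull_nonempty_iff.1 hne
    exact ⟨isFaceOf_convexHull_of_subset (hs.mono hP₁) (hfin.subset hP₁) inter_subset_left hne',
      isFaceOf_convexHull_of_subset (hs.mono hP₂) (hfin.subset hP₂) inter_subset_right hne'⟩

theorem affineIndependent_of_isComplexCol_subsetHulls {s : Set (Fin n → K)}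
    (h : IsComplexCol (subsetHulls K s)) : AffineIndependent K ((↑) : s → Fin n → K) := by
  by_contra hdep
  obtain ⟨I, hI⟩ := Convex.radon_partition hdep
  have hmem : ∀ J : Set s, (convexHull K (Subtype.val '' J)).Nonempty →
      convexHull K (Subtype.val '' J) ∈ subsetHulls K s := fun J hJ =>
    ⟨_, image_subset_iff.2 fun x _ => x.2, convexHull_nonempty_iff.1 hJ, rfl⟩
  set X := convexHull K (Subtype.val '' I)
  set Y := convexHull K (Subtype.val '' Iᶜ)
  obtain ⟨hfX, hfY⟩ :=
    h.2.2.2 X (hmem I (hI.mono inter_subset_left)) Y (hmem Iᶜ (hI.mono inter_subset_right)) hI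
  obtain ⟨P, hPX, ⟨x, hxP⟩, hXYP⟩ := hfX.exists_subset_extremePoints
  obtain ⟨Q, hQY, -, hXYQ⟩ := hfY.exists_subset_extremePoints
  -- an extreme point of `X` lying in the common face `X ∩ Y` is a vertex of it, hence of `Y`
  have hxQ : x ∈ Q := by
    have hxXY : x ∈ X ∩ Y := hXYP ▸ subset_convexHull K P hxP
    have := inter_extremePoints_subset_extremePoints_of_subset inter_subset_left ⟨hxXY, hPX hxP⟩
    rw [hXYQ] at this
    exact extremePoints_convexHull_subset this
  obtain ⟨i, hi, rfl⟩ := extremePoints_convexHull_subset (hPX hxP)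
  obtain ⟨j, hj, hji⟩ := extremePoints_convexHull_subset (hQY hxQ)
  exact hj (Subtype.ext hji ▸ hi)

theorem isComplexCol_subsetHulls_iff {s : Set (Fin n → K)} (hfin : s.Finite) :
    IsComplexCol (subsetHulls K s) ↔ AffineIndependent K ((↑) : s → Fin n → K) :=
  ⟨affineIndependent_of_isComplexCol_subsetHulls, fun hs => isComplexCol_subsetHulls hs hfin⟩

end Complexes

section Simplicial

variable {K : Type*} [Field K] [LinearOrder K] [IsStrictOrderedRing K] {n : ℕ}

theorem IsSimplicialWith.range_comp {m k : ℕ} {a : Fin (m + 1) → Fin n → K}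
    {ι : Fin (k + 1) → Fin (m + 1)} (h : IsSimplicialWith a ι) : range (a ∘ ι) = range a := by
  obtain ⟨-, h0, -, hblock⟩ := h
  refine (range_comp_subset_range ι a).antisymm ?_
  rintro _ ⟨i, rfl⟩
  classical
  obtain ⟨κ, hκ, hmax⟩ := (Finset.univ.filter fun κ => ι κ ≤ i).exists_max_image id
    ⟨0, by simp [h0]⟩
  simp only [Finset.mem_filter, Finset.mem_univ, true_and, id] at hκ hmax
  refine ⟨κ, (hblock κ i hκ fun κ' hκ' => ?_).symm⟩
  by_contra! hle
  exact (hmax κ' hle).not_gt hκ'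

theorem isSimplicialSeq_comp_of_monotone {m k : ℕ} {c : Fin (k + 1) → Fin n → K}
    (hc : AffineIndependent K c) {g : Fin (m + 1) → Fin (k + 1)} (hg : Monotone g)
    (hgs : Function.Surjective g) : IsSimplicialSeq (c ∘ g) := by
  classical
  have hfib (κ) : (Finset.univ.filter fun i => g i = κ).Nonempty :=
    let ⟨i, hi⟩ := hgs κ; ⟨i, by simp [hi]⟩
  let ι (κ : Fin (k + 1)) : Fin (m + 1) := (Finset.univ.filter fun i => g i = κ).min' (hfib κ)
  have hgι (κ) : g (ι κ) = κ := by simpa using Finset.min'_mem _ (hfib κ)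
  have hιg (i) : ι (g i) ≤ i := Finset.min'_le _ i (by simp)
  have hg0 : g 0 = 0 := by
    obtain ⟨i, hi⟩ := hgs 0
    exact nonpos_iff_eq_zero.1 (hi ▸ hg (Fin.zero_le i))
  refine ⟨k, ι, fun κ κ' hlt => ?_, nonpos_iff_eq_zero.1 (hg0 ▸ hιg 0), ?_, fun κ i hle hlt => ?_⟩
  · by_contra! hle
    exact (hgι κ ▸ hgι κ' ▸ hg hle).not_gt hlt
  · convert hc using 1
    funext κ
    simp [hgι]
  · have hgi : g i = κ := by
      refine le_antisymm ?_ (hgι κ ▸ hg hle)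
      by_contra! hgt
      exact (hιg i).not_gt (hlt _ hgt)
    simp [hgi, hgι]

theorem exists_perm_isSimplicialSeq_iff {m : ℕ} {b : Fin (m + 1) → Fin n → K} :
    (∃ σ : Equiv.Perm (Fin (m + 1)), IsSimplicialSeq fun j => b (σ j)) ↔
      AffineIndependent K ((↑) : range b → Fin n → K) := by
  constructor
  · rintro ⟨σ, k, ι, hι⟩
    have hrange : range ((fun j => b (σ j)) ∘ ι) = range b := by
      rw [hι.range_comp, ← Function.comp_def, range_comp, σ.range_eq_univ, image_univ]
    exact hrange ▸ hι.2.2.1.range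
  · intro hb
    obtain ⟨k, c, hc, hcb⟩ := hb.exists_fin_range_eq (finite_range b) (range_nonempty b)
    have hf (j) : ∃ κ, c κ = b j := by rw [← mem_range, hcb]; exact mem_range_self j
    choose f hf using hf
    have hfs : Function.Surjective f := fun κ => by
      obtain ⟨j, hj⟩ : c κ ∈ range b := hcb ▸ mem_range_self κ
      exact ⟨j, hc.injective (by rw [hf, hj])⟩
    refine ⟨Tuple.sort f, ?_⟩
    have hbσ : (fun j => b (Tuple.sort f j)) = c ∘ (f ∘ Tuple.sort f) := funext fun j => (hf _).symm
    rw [hbσ]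
    exact isSimplicialSeq_comp_of_monotone hc (Tuple.monotone_sort f)
      (hfs.comp (Equiv.surjective _))

end Simplicial

theorem st_zero {R kk : Type*} [Ring R] [Ring kk] {V : Subring R} {st : R → kk}
    (hadd : ∀ x ∈ V, ∀ y ∈ V, st (x + y) = st x + st y) : st 0 = 0 := by
  simpa using hadd 0 V.zero_mem 0 V.zero_mem

theorem st_smul_add_smul {R kk : Type*} [Ring R] [Semiring kk] {V : Subring R} {st : R → kk}
    {n : ℕ} (hadd : ∀ x ∈ V, ∀ y ∈ V, st (x + y) = st x + st y)
    (hmul : ∀ x ∈ V, ∀ y ∈ V, st (x * y) = st x * st y) {p q : R} (hp : p ∈ V) (hq : q ∈ V)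
    {x y : Fin n → R} (hx : ∀ i, x i ∈ V) (hy : ∀ i, y i ∈ V) :
    (fun i => st ((p • x + q • y) i)) = st p • (fun i => st (x i)) + st q • fun i => st (y i) := by
  funext i
  simp only [Pi.add_apply, Pi.smul_apply, smul_eq_mul]
  rw [hadd _ (V.mul_mem hp (hx i)) _ (V.mul_mem hq (hy i)), hmul _ hp _ (hx i), hmul _ hq _ (hy i)]

section StandardPart

variable {R kk : Type*} [Field R] [LinearOrder R] [IsStrictOrderedRing R] [Field kk]
  [LinearOrder kk] {V : Subring R} {st : R → kk} {n : ℕ}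

theorem mem_of_nonneg_of_le_one (hconv : ∀ x y : R, |x| ≤ |y| → y ∈ V → x ∈ V) {p : R}
    (h0 : 0 ≤ p) (h1 : p ≤ 1) : p ∈ V :=
  hconv p 1 (by rwa [abs_of_nonneg h0, abs_one]) V.one_mem

theorem convex_setOf_forall_mem (hconv : ∀ x y : R, |x| ≤ |y| → y ∈ V → x ∈ V) :
    Convex R {x : Fin n → R | ∀ i, x i ∈ V} := by
  intro x hx y hy p q hp hq hpq i
  exact V.add_mem (V.mul_mem (mem_of_nonneg_of_le_one hconv hp (by linarith)) (hx i))
    (V.mul_mem (mem_of_nonneg_of_le_one hconv hq (by linarith)) (hy i))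

theorem exists_st_eq_of_nonneg_of_le_one (hadd : ∀ x ∈ V, ∀ y ∈ V, st (x + y) = st x + st y)
    (hone : st 1 = 1) (hmono : ∀ x ∈ V, ∀ y ∈ V, x ≤ y → st x ≤ st y)
    (hsurj : ∀ c : kk, ∃ x ∈ V, st x = c) {c : kk} (h0 : 0 ≤ c) (h1 : c ≤ 1) :
    ∃ p ∈ V, 0 ≤ p ∧ p ≤ 1 ∧ st p = c := by
  obtain ⟨p, hpV, rfl⟩ := hsurj c
  rcases lt_or_ge p 0 with hp0 | hp0
  · refine ⟨0, V.zero_mem, le_rfl, zero_le_one, le_antisymm (st_zero hadd ▸ h0) ?_⟩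
    exact hmono p hpV 0 V.zero_mem hp0.le
  rcases le_or_gt p 1 with hp1 | hp1
  · exact ⟨p, hpV, hp0, hp1, rfl⟩
  · refine ⟨1, V.one_mem, zero_le_one, le_rfl, le_antisymm ?_ (hone ▸ h1)⟩
    exact hmono 1 V.one_mem p hpV hp1.le

theorem image_st_convexHull_subset (hconv : ∀ x y : R, |x| ≤ |y| → y ∈ V → x ∈ V)
    (hadd : ∀ x ∈ V, ∀ y ∈ V, st (x + y) = st x + st y)
    (hmul : ∀ x ∈ V, ∀ y ∈ V, st (x * y) = st x * st y) (hone : st 1 = 1)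
    (hmono : ∀ x ∈ V, ∀ y ∈ V, x ≤ y → st x ≤ st y) {A : Set (Fin n → R)}
    (hA : A ⊆ {x | ∀ i, x i ∈ V}) :
    (fun x i => st (x i)) '' convexHull R A ⊆ convexHull kk ((fun x i => st (x i)) '' A) := by
  suffices convexHull R A ⊆
      {x | (∀ i, x i ∈ V) ∧ (fun i => st (x i)) ∈ convexHull kk ((fun x i => st (x i)) '' A)} by
    rintro _ ⟨x, hx, rfl⟩
    exact (this hx).2
  refine convexHull_min (fun x hx => ⟨hA hx, subset_convexHull kk _ (mem_image_of_mem _ hx)⟩) ?_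
  rintro x ⟨hxV, hx⟩ y ⟨hyV, hy⟩ p q hp hq hpq
  have hpV := mem_of_nonneg_of_le_one hconv hp (by linarith)
  have hqV := mem_of_nonneg_of_le_one hconv hq (by linarith)
  refine ⟨convex_setOf_forall_mem hconv hxV hyV hp hq hpq, ?_⟩
  have hst0 := st_zero hadd
  rw [st_smul_add_smul hadd hmul hpV hqV hxV hyV]
  exact convex_convexHull kk _ hx hy (hst0 ▸ hmono 0 V.zero_mem p hpV hp)
    (hst0 ▸ hmono 0 V.zero_mem q hqV hq)
    (by rw [← hadd _ hpV _ hqV, hpq, hone])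

theorem convexHull_image_st_subset [IsStrictOrderedRing kk]
    (hconv : ∀ x y : R, |x| ≤ |y| → y ∈ V → x ∈ V)
    (hadd : ∀ x ∈ V, ∀ y ∈ V, st (x + y) = st x + st y)
    (hmul : ∀ x ∈ V, ∀ y ∈ V, st (x * y) = st x * st y) (hone : st 1 = 1)
    (hmono : ∀ x ∈ V, ∀ y ∈ V, x ≤ y → st x ≤ st y) (hsurj : ∀ c : kk, ∃ x ∈ V, st x = c)
    {A : Set (Fin n → R)} (hA : A ⊆ {x | ∀ i, x i ∈ V}) :
    convexHull kk ((fun x i => st (x i)) '' A) ⊆ (fun x i => st (x i)) '' convexHull R A := by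
  have hAV := convexHull_min hA (convex_setOf_forall_mem hconv)
  refine convexHull_min (image_mono (subset_convexHull R A)) ?_
  rintro _ ⟨x, hx, rfl⟩ _ ⟨y, hy, rfl⟩ _ q hp hq hpq
  obtain ⟨p, hpV, hp0, hp1, rfl⟩ :=
    exists_st_eq_of_nonneg_of_le_one hadd hone hmono hsurj hp (by linarith)
  have hq' : st (1 - p) = q := by
    have := hadd (1 - p) (V.sub_mem V.one_mem hpV) p hpV
    rw [sub_add_cancel, hone] at this
    linarith
  refine ⟨p • x + (1 - p) • y, convex_convexHull R A hx hy hp0 (by linarith) (by ring),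
    (st_smul_add_smul hadd hmul hpV (V.sub_mem V.one_mem hpV) (hAV hx) (hAV hy)).trans ?_⟩
  rw [hq']

theorem stSet_convexHull [IsStrictOrderedRing kk] (hconv : ∀ x y : R, |x| ≤ |y| → y ∈ V → x ∈ V)
    (hadd : ∀ x ∈ V, ∀ y ∈ V, st (x + y) = st x + st y)
    (hmul : ∀ x ∈ V, ∀ y ∈ V, st (x * y) = st x * st y) (hone : st 1 = 1)
    (hmono : ∀ x ∈ V, ∀ y ∈ V, x ≤ y → st x ≤ st y) (hsurj : ∀ c : kk, ∃ x ∈ V, st x = c)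
    {A : Set (Fin n → R)} (hA : A ⊆ {x | ∀ i, x i ∈ V}) :
    stSet V st (convexHull R A) = convexHull kk ((fun x i => st (x i)) '' A) := by
  rw [stSet, inter_eq_left.2 (convexHull_min hA (convex_setOf_forall_mem hconv))]
  exact (image_st_convexHull_subset hconv hadd hmul hone hmono hA).antisymm
    (convexHull_image_st_subset hconv hadd hmul hone hmono hsurj hA)

end StandardPart

theorem stmt11_general {R kk : Type*} [Field R] [LinearOrder R] [IsStrictOrderedRing R] [Field kk] [LinearOrder kk] [IsStrictOrderedRing kk]
    (V : Subring R)
    (hconv : ∀ x y : R, |x| ≤ |y| → y ∈ V → x ∈ V)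
    (st : R → kk)
    (hadd : ∀ x ∈ V, ∀ y ∈ V, st (x + y) = st x + st y)
    (hmul : ∀ x ∈ V, ∀ y ∈ V, st (x * y) = st x * st y)
    (hone : st 1 = 1)
    (hmono : ∀ x ∈ V, ∀ y ∈ V, x ≤ y → st x ≤ st y)
    (hsurj : ∀ c : kk, ∃ x ∈ V, st x = c)
    {n m : ℕ} (a : Fin (m + 1) → (Fin n → R))
    (haV : ∀ j i, a j i ∈ V) :
    -- S = [a₀,…,a_m] is a V-simplex, i.e. the standard parts of its faces form a
    -- complex in kⁿ, iff some enumeration of its vertices has simplicial standard part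
    (IsComplexCol {Z : Set (Fin n → kk) | ∃ T : Finset (Fin (m + 1)), T.Nonempty ∧
        Z = stSet V st (convexHull R (a '' ↑T))})
      ↔ ∃ σ : Equiv.Perm (Fin (m + 1)),
          IsSimplicialSeq (fun j => fun i => st (a (σ j) i)) := by
  have hfaces : {Z : Set (Fin n → kk) | ∃ T : Finset (Fin (m + 1)), T.Nonempty ∧
      Z = stSet V st (convexHull R (a '' ↑T))} = subsetHulls kk (range fun j i => st (a j i)) := by
    rw [← setOf_convexHull_image_eq_subsetHulls]
    ext Z
    refine exists_congr fun T => and_congr_right fun _ => ?_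
    rw [stSet_convexHull hconv hadd hmul hone hmono hsurj
      (image_subset_iff.2 fun j _ => haV j), image_image]
  rw [hfaces, isComplexCol_subsetHulls_iff (finite_range _)]
  exact exists_perm_isSimplicialSeq_iff.symm

theorem stmt11 {R kk : Type*} [Field R] [LinearOrder R] [IsStrictOrderedRing R] [Field kk] [LinearOrder kk] [IsStrictOrderedRing kk]
    (V : Subring R)
    (hconv : ∀ x y : R, |x| ≤ |y| → y ∈ V → x ∈ V)
    (hproper : (V : Set R) ≠ Set.univ)
    (st : R → kk)
    (hker : ∀ x ∈ V, ∀ y ∈ V, (st x = st y ↔ x - y ∈ mSet V))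
    (hadd : ∀ x ∈ V, ∀ y ∈ V, st (x + y) = st x + st y)
    (hmul : ∀ x ∈ V, ∀ y ∈ V, st (x * y) = st x * st y)
    (hone : st 1 = 1)
    (hmono : ∀ x ∈ V, ∀ y ∈ V, x ≤ y → st x ≤ st y)
    (hsurj : ∀ c : kk, ∃ x ∈ V, st x = c)
    {n m : ℕ} (a : Fin (m + 1) → (Fin n → R))
    (ha : AffineIndependent R a) (haV : ∀ j i, a j i ∈ V) :
    -- S = [a₀,…,a_m] is a V-simplex, i.e. the standard parts of its faces form a
    -- complex in kⁿ, iff some enumeration of its vertices has simplicial standard part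
    (IsComplexCol {Z : Set (Fin n → kk) | ∃ T : Finset (Fin (m + 1)), T.Nonempty ∧
        Z = stSet V st (convexHull R (a '' ↑T))})
      ↔ ∃ σ : Equiv.Perm (Fin (m + 1)),
          IsSimplicialSeq (fun j => fun i => st (a (σ j) i)) :=
  stmt11_general V hconv st hadd hmul hone hmono hsurj a haV
end

section
/- Let S = [a₀,…,a_k] be a k-simplex in ℝⁿ with k ≥ 1, let δ(S) be the union of its proper faces, and fix u in the direction space of the affine span of S not parallel to any facet hyperplane of S. Then for each x ∈ δ(S), (x + ℝu) ∩ S = [x, λ(x)] for a unique λ(x) ∈ S with (x + ℝu) ∩ δ(S) = {x, λ(x)}, and the map λ: δ(S) → δ(S) is continuous and satisfies λ(λ(x)) = x whenever x ≠ λ(x); moreover the map α(t,x) = (1−t)x + tλ(x) maps [0,1] × δ(S) onto S. -/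
open Set Finset

set_option maxHeartbeats 2000000

theorem stmt13_dual {m : ℕ} {V : Type*} [AddCommGroup V] [Module ℝ V]
    (v : Fin m → V) (li : LinearIndependent ℝ v) :
    ∃ f : Fin m → V →ₗ[ℝ] ℝ, ∀ i j, f i (v j) = if j = i then 1 else 0 := by
  classical
  have ls : LinearIndepOn ℝ id (Set.range v) := (linearIndepOn_id_range_iff li.injective).2 li
  let B := Module.Basis.extend ls
  have hsub : Set.range v ⊆ ls.extend (Set.subset_univ _) := ls.subset_extend _
  refine ⟨fun i => (B.coord ⟨v i, hsub (Set.mem_range_self i)⟩), fun i j => ?_⟩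
  have hj : B ⟨v j, hsub (Set.mem_range_self j)⟩ = v j := Module.Basis.extend_apply_self ls _
  rw [Module.Basis.coord_apply, ← hj, Module.Basis.repr_self]
  simp only [Finsupp.single_apply]
  by_cases h : j = i
  · subst h; simp
  · rw [if_neg (fun hh => h (li.injective (congrArg Subtype.val hh))), if_neg h]


theorem stmt13_sup'_sub {ι : Type*} (s : Finset ι) (H : s.Nonempty) (g : ι → ℝ) (c : ℝ) :
    s.sup' H (fun i => g i - c) = s.sup' H g - c := by
  apply le_antisymm
  · exact Finset.sup'_le _ _ fun i hi => sub_le_sub_right (Finset.le_sup' g hi) c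
  · rw [sub_le_iff_le_add]
    exact Finset.sup'_le _ _ fun i hi => by
      have := Finset.le_sup' (fun i => g i - c) hi
      linarith

theorem stmt13_inf'_sub {ι : Type*} (s : Finset ι) (H : s.Nonempty) (g : ι → ℝ) (c : ℝ) :
    s.inf' H (fun i => g i - c) = s.inf' H g - c := by
  apply le_antisymm
  · rw [le_sub_iff_add_le]
    apply Finset.le_inf'
    intro i hi
    have := Finset.inf'_le (fun i => g i - c) hi
    linarith
  · exact Finset.le_inf' _ _ fun i hi => sub_le_sub_right (Finset.inf'_le g hi) c

theorem stmt13_cont_sup' {ι X : Type*} [TopologicalSpace X] (s : Finset ι) (H : s.Nonempty)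
    (g : ι → X → ℝ) (hg : ∀ i, Continuous (g i)) :
    Continuous fun x => s.sup' H fun i => g i x := by
  induction H using Finset.Nonempty.cons_induction with
  | singleton a => simp only [Finset.sup'_singleton]; exact hg a
  | cons a s h hs ih =>
    simp only [Finset.sup'_cons hs]
    exact (hg a).max ih

theorem stmt13_cont_inf' {ι X : Type*} [TopologicalSpace X] (s : Finset ι) (H : s.Nonempty)
    (g : ι → X → ℝ) (hg : ∀ i, Continuous (g i)) :
    Continuous fun x => s.inf' H fun i => g i x := by
  induction H using Finset.Nonempty.cons_induction with
  | singleton a => simp only [Finset.inf'_singleton]; exact hg a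
  | cons a s h hs ih =>
    simp only [Finset.inf'_cons hs]
    exact (hg a).min ih

theorem stmt13 {n k : ℕ} (hk : 1 ≤ k)
    (a : Fin (k + 1) → (Fin n → ℝ)) (ha : AffineIndependent ℝ a)
    (S : Set (Fin n → ℝ)) (hS : S = convexHull ℝ (Set.range a))
    -- δ(S): the union of the proper faces of S
    (dS : Set (Fin n → ℝ))
    (hdS : dS = ⋃ (T : Finset (Fin (k + 1))) (_ : T.Nonempty ∧ T ≠ Finset.univ),
        convexHull ℝ (a '' ↑T))
    (u : Fin n → ℝ)
    -- u is in the direction space of the affine span of S …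
    (huL : u ∈ vectorSpan ℝ (Set.range a))
    -- … but parallel to no facet hyperplane
    (huLi : ∀ i : Fin (k + 1), u ∉ vectorSpan ℝ (a '' {j | j ≠ i})) :
    ∃ lam : (Fin n → ℝ) → (Fin n → ℝ),
      (∀ x ∈ dS,
        lam x ∈ S ∧
        -- (x + ℝu) ∩ S = [x, λ(x)]
        {y | ∃ t : ℝ, y = x + t • u} ∩ S = segment ℝ x (lam x) ∧
        -- λ(x) is the unique such point
        (∀ y, {z | ∃ t : ℝ, z = x + t • u} ∩ S = segment ℝ x y → y = lam x) ∧
        -- (x + ℝu) ∩ δ(S) = {x, λ(x)}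
        {y | ∃ t : ℝ, y = x + t • u} ∩ dS = {x, lam x}) ∧
      ContinuousOn lam dS ∧
      -- λ matches up the two intersection points
      (∀ x ∈ dS, lam x ≠ x → lam (lam x) = x) ∧
      -- α(t,x) = (1−t)x + tλ(x) maps [0,1] × δ(S) onto S
      (fun p : ℝ × (Fin n → ℝ) => (1 - p.1) • p.2 + p.1 • lam p.2) ''
          (Set.Icc (0:ℝ) 1 ×ˢ dS) = S := by
  classical
  -- the linearly independent difference family
  set v : Fin k → (Fin n → ℝ) := fun j => a j.succ - a 0 with hv
  have hli : LinearIndependent ℝ v := by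
    have h1 := (affineIndependent_iff_linearIndependent_vsub ℝ a 0).1 ha
    have h2 := h1.comp (fun j : Fin k => (⟨j.succ, Fin.succ_ne_zero j⟩ : {x : Fin (k+1) // x ≠ 0}))
      (fun i j hij => Fin.succ_injective _ (congrArg Subtype.val hij))
    exact h2
  obtain ⟨f, hf⟩ := stmt13_dual v hli
  -- barycentric coordinates
  set φ : Fin k → (Fin n → ℝ) → ℝ := fun j x => f j (x - a 0) with hφ
  set β : (Fin n → ℝ) → Fin (k+1) → ℝ :=
    fun x => Fin.cases (1 - ∑ j, φ j x) (fun j => φ j x) with hβdef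
  have hβ0 : ∀ x, β x 0 = 1 - ∑ j, φ j x := fun x => rfl
  have hβs : ∀ x j, β x j.succ = φ j x := fun x j => rfl
  have sumβ : ∀ x, ∑ i, β x i = 1 := by
    intro x
    rw [Fin.sum_univ_succ, hβ0]
    simp only [hβs]
    ring
  -- coordinates of affine combinations
  have hA : ∀ w : Fin (k+1) → ℝ, (∑ i, w i = 1) → ∀ i, β (∑ j, w j • a j) i = w i := by
    intro w hw
    have key : ∀ j : Fin k, φ j (∑ m, w m • a m) = w j.succ := by
      intro j
      have hd : (∑ m, w m • a m) - a 0 = ∑ m, w m • (a m - a 0) := by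
        simp only [smul_sub]
        rw [Finset.sum_sub_distrib, ← Finset.sum_smul, hw, one_smul]
      rw [hφ]
      simp only []
      rw [hd, map_sum]
      have : ∀ m : Fin (k+1), f j (w m • (a m - a 0)) = w m * f j (a m - a 0) := by
        intro m; rw [map_smul]; rfl
      simp only [this]
      rw [Fin.sum_univ_succ]
      simp only [sub_self, map_zero, mul_zero, zero_add]
      have : ∀ m : Fin k, f j (a m.succ - a 0) = if m = j then 1 else 0 := fun m => hf j m
      simp only [this, mul_ite, mul_one, mul_zero]
      simp
    intro i
    induction i using Fin.cases with
    | zero =>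
      rw [hβ0]
      simp only [key]
      rw [Fin.sum_univ_succ] at hw
      linarith
    | succ j => rw [hβs]; exact key j
  -- direction coordinates
  set γ : Fin (k+1) → ℝ := Fin.cases (-(∑ j, f j u)) (fun j => f j u) with hγdef
  have hγ0 : γ 0 = -(∑ j, f j u) := rfl
  have hγs : ∀ j, γ j.succ = f j u := fun j => rfl
  have sumγ : ∑ i, γ i = 0 := by
    rw [Fin.sum_univ_succ, hγ0]
    simp only [hγs]
    ring
  have hβshift : ∀ x (t : ℝ) i, β (x + t • u) i = β x i + t * γ i := by
    intro x t i
    have hφshift : ∀ j, φ j (x + t • u) = φ j x + t * f j u := by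
      intro j
      rw [hφ]
      simp only []
      have : x + t • u - a 0 = (x - a 0) + t • u := by abel
      rw [this, map_add, map_smul]
      rfl
    induction i using Fin.cases with
    | zero =>
      rw [hβ0, hβ0, hγ0]
      simp only [hφshift]
      rw [Finset.sum_add_distrib, ← Finset.mul_sum]
      ring
    | succ j => rw [hβs, hβs, hγs]; exact hφshift j
  -- u as a combination of the differences
  have huv : u ∈ Submodule.span ℝ (Set.range v) := by
    rw [vectorSpan_range_eq_span_range_vsub_right_ne ℝ a 0] at huL
    have hrange : (Set.range fun i : { x : Fin (k+1) // x ≠ 0 } => a ↑i -ᵥ a 0) = Set.range v := by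
      ext w
      constructor
      · rintro ⟨⟨i, hi⟩, rfl⟩
        exact ⟨(i.pred hi), by simp [hv, Fin.succ_pred]⟩
      · rintro ⟨j, rfl⟩
        exact ⟨⟨j.succ, Fin.succ_ne_zero j⟩, rfl⟩
    rwa [hrange] at huL
  obtain ⟨c, hc⟩ := (Submodule.mem_span_range_iff_exists_fun ℝ).1 huv
  have hfu : ∀ j, f j u = c j := by
    intro j
    rw [← hc, map_sum]
    have : ∀ m : Fin k, f j (c m • v m) = c m * (if m = j then 1 else 0) := by
      intro m; rw [map_smul, hf]; rfl
    simp only [this, mul_ite, mul_one, mul_zero]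
    simp
  have hu : u = ∑ i, γ i • a i := by
    rw [Fin.sum_univ_succ, hγ0]
    simp only [hγs, hfu]
    rw [← hc]
    simp only [hv, smul_sub]
    rw [Finset.sum_sub_distrib, ← Finset.sum_smul, neg_smul]
    abel
  have hγne : ∀ i, γ i ≠ 0 := by
    intro i hγi
    apply huLi i
    induction i using Fin.cases with
    | succ m =>
      have hcm : c m = 0 := by rw [← hfu, ← hγs]; exact hγi
      rw [← hc]
      apply Submodule.sum_mem
      intro j _
      by_cases hj : j = m
      · subst hj; rw [hcm, zero_smul]; exact Submodule.zero_mem _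
      · apply Submodule.smul_mem
        have h1 : a j.succ ∈ a '' {i : Fin (k+1) | i ≠ m.succ} :=
          Set.mem_image_of_mem a (fun hh => hj (Fin.succ_injective _ hh))
        have h2 : a 0 ∈ a '' {i : Fin (k+1) | i ≠ m.succ} :=
          Set.mem_image_of_mem a (fun hh => Fin.succ_ne_zero m hh.symm)
        have := vsub_mem_vectorSpan ℝ h1 h2
        simpa [hv] using this
    | zero =>
      have hcsum : ∑ j, c j = 0 := by
        rw [hγ0] at hγi
        simp only [hfu] at hγi
        linarith [neg_eq_zero.1 hγi]
      haveI : NeZero k := ⟨by omega⟩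
      set p : Fin (k+1) := (0 : Fin k).succ with hp
      have hdecomp : u = ∑ j, c j • (a j.succ - a p) := by
        rw [← hc]
        simp only [hv, smul_sub]
        rw [Finset.sum_sub_distrib, Finset.sum_sub_distrib, ← Finset.sum_smul, ← Finset.sum_smul,
          hcsum, zero_smul, zero_smul]
      rw [hdecomp]
      apply Submodule.sum_mem
      intro j _
      apply Submodule.smul_mem
      have h1 : a j.succ ∈ a '' {i : Fin (k+1) | i ≠ 0} :=
        Set.mem_image_of_mem a (Fin.succ_ne_zero j)
      have h2 : a p ∈ a '' {i : Fin (k+1) | i ≠ 0} :=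
        Set.mem_image_of_mem a (Fin.succ_ne_zero _)
      have := vsub_mem_vectorSpan ℝ h1 h2
      simpa using this
  have hu0 : u ≠ 0 := fun h => huLi 0 (h ▸ Submodule.zero_mem _)
  -- membership characterization for S
  have hSmem : ∀ x, x ∈ S ↔ ((∀ i, 0 ≤ β x i) ∧ x = ∑ i, β x i • a i) := by
    intro x
    constructor
    · intro hx
      rw [hS, convexHull_range_eq_exists_affineCombination] at hx
      obtain ⟨s, w, hw0, hw1, hwx⟩ := hx
      rw [affineCombination_eq_linear_combination s a w hw1] at hwx
      set w' : Fin (k+1) → ℝ := fun i => if i ∈ s then w i else 0 with hw'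
      have hsum' : ∑ i, w' i = 1 := by
        rw [hw']
        simp only [Finset.sum_ite_mem, Finset.univ_inter]
        exact hw1
      have hx' : x = ∑ i, w' i • a i := by
        rw [← hwx, hw']
        simp only [ite_smul, zero_smul, Finset.sum_ite_mem, Finset.univ_inter]
      have hβw : ∀ i, β x i = w' i := by
        intro i
        rw [hx']
        exact hA w' hsum' i
      constructor
      · intro i
        rw [hβw i, hw']
        by_cases h : i ∈ s
        · simpa [h] using hw0 i h
        · simp [h]
      · rw [Finset.sum_congr rfl (fun i _ => by rw [hβw i])]
        exact hx'
    · rintro ⟨h0, hgood⟩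
      rw [hS]
      have := Finset.centerMass_mem_convexHull (Finset.univ) (fun i _ => h0 i)
        (by rw [sumβ x]; norm_num) (fun i _ => Set.mem_range_self (f := a) i)
      rwa [Finset.centerMass_eq_of_sum_1 _ _ (sumβ x), ← hgood] at this
  -- membership characterization for dS
  have hdSmem : ∀ x, x ∈ dS ↔ (x ∈ S ∧ ∃ i, β x i = 0) := by
    intro x
    constructor
    · intro hx
      rw [hdS] at hx
      simp only [Set.mem_iUnion] at hx
      obtain ⟨T, ⟨hTne, hTnu⟩, hx⟩ := hx
      rw [← Finset.coe_image, Finset.convexHull_eq] at hx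
      obtain ⟨w, hw0, hw1, hwx⟩ := hx
      rw [Finset.centerMass_eq_of_sum_1 _ _ hw1] at hwx
      have hinj : ∀ x ∈ T, ∀ y ∈ T, a x = a y → x = y := fun x _ y _ h => ha.injective h
      set w' : Fin (k+1) → ℝ := fun i => if i ∈ T then w (a i) else 0 with hw'
      have hsum' : ∑ i, w' i = 1 := by
        rw [hw']
        simp only [Finset.sum_ite_mem, Finset.univ_inter]
        rw [← Finset.sum_image hinj]
        exact hw1
      have hx' : x = ∑ i, w' i • a i := by
        rw [← hwx, hw']
        simp only [ite_smul, zero_smul, Finset.sum_ite_mem, Finset.univ_inter]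
        rw [Finset.sum_image hinj]
        simp
      have hβw : ∀ i, β x i = w' i := by
        intro i
        rw [hx']
        exact hA w' hsum' i
      have hxS : x ∈ S := by
        rw [hSmem]
        constructor
        · intro i
          rw [hβw i, hw']
          by_cases h : i ∈ T
          · simpa [h] using hw0 (a i) (Finset.mem_image_of_mem a h)
          · simp [h]
        · rw [Finset.sum_congr rfl (fun i _ => by rw [hβw i])]
          exact hx'
      refine ⟨hxS, ?_⟩
      obtain ⟨i, hi⟩ : ∃ i, i ∉ T := by
        by_contra hcon
        push_neg at hcon
        exact hTnu (Finset.eq_univ_iff_forall.2 hcon)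
      exact ⟨i, by rw [hβw i]; simp [hw', hi]⟩
    · rintro ⟨hxS, i₀, hi0⟩
      obtain ⟨h0, hgood⟩ := (hSmem x).1 hxS
      rw [hdS]
      simp only [Set.mem_iUnion]
      refine ⟨Finset.univ.erase i₀, ⟨?_, ?_⟩, ?_⟩
      · rw [← Finset.card_pos, Finset.card_erase_of_mem (Finset.mem_univ i₀)]
        simp only [Finset.card_univ, Fintype.card_fin]
        omega
      · intro h
        have h2 := Finset.notMem_erase i₀ Finset.univ
        rw [h] at h2
        exact h2 (Finset.mem_univ i₀)
      · have hsum : ∑ i ∈ Finset.univ.erase i₀, β x i = 1 := by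
          rw [Finset.sum_erase_eq_sub (Finset.mem_univ i₀), sumβ x, hi0, sub_zero]
        have := Finset.centerMass_mem_convexHull (Finset.univ.erase i₀)
          (fun i _ => h0 i) (by rw [hsum]; norm_num)
          (fun i hi => Set.mem_image_of_mem a (Finset.mem_coe.2 hi))
        rwa [Finset.centerMass_eq_of_sum_1 _ _ hsum,
          Finset.sum_erase_eq_sub (s := Finset.univ) (Finset.mem_univ i₀), hi0, zero_smul, sub_zero,
          ← hgood] at this
  -- the Pos/Neg index sets
  set Pos : Finset (Fin (k+1)) := Finset.univ.filter (fun i => 0 < γ i) with hPosdef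
  set Neg : Finset (Fin (k+1)) := Finset.univ.filter (fun i => γ i < 0) with hNegdef
  have hPos : Pos.Nonempty := by
    by_contra hcon
    rw [Finset.not_nonempty_iff_eq_empty] at hcon
    have hneg : ∀ i : Fin (k+1), γ i < 0 := by
      intro i
      rcases lt_trichotomy (γ i) 0 with h | h | h
      · exact h
      · exact absurd h (hγne i)
      · exact absurd (Finset.mem_filter.2 ⟨Finset.mem_univ i, h⟩)
          (by rw [← hPosdef, hcon]; exact Finset.notMem_empty i)
    have := Finset.sum_neg (fun i _ => hneg i) Finset.univ_nonempty
    rw [sumγ] at this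
    exact lt_irrefl 0 this
  have hNeg : Neg.Nonempty := by
    by_contra hcon
    rw [Finset.not_nonempty_iff_eq_empty] at hcon
    have hpos : ∀ i : Fin (k+1), 0 < γ i := by
      intro i
      rcases lt_trichotomy (γ i) 0 with h | h | h
      · exact absurd (Finset.mem_filter.2 ⟨Finset.mem_univ i, h⟩)
          (by rw [← hNegdef, hcon]; exact Finset.notMem_empty i)
      · exact absurd h (hγne i)
      · exact h
    have := Finset.sum_pos (fun i _ => hpos i) Finset.univ_nonempty
    rw [sumγ] at this
    exact lt_irrefl 0 this
  -- the parametrized bounds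
  set q : (Fin n → ℝ) → Fin (k+1) → ℝ := fun x i => β x i / (-γ i) with hq
  set tmin : (Fin n → ℝ) → ℝ := fun x => Pos.sup' hPos (q x) with htmin
  set tmax : (Fin n → ℝ) → ℝ := fun x => Neg.inf' hNeg (q x) with htmax
  have hIff : ∀ x (t : ℝ), ((∀ i, 0 ≤ β x i + t * γ i) ↔ (tmin x ≤ t ∧ t ≤ tmax x)) := by
    intro x t
    constructor
    · intro h
      constructor
      · apply Finset.sup'_le
        intro i hi
        have hγi : 0 < γ i := (Finset.mem_filter.1 hi).2
        rw [hq]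
        simp only
        rw [div_le_iff_of_neg (by linarith : -γ i < 0)]
        have := h i
        nlinarith
      · apply Finset.le_inf'
        intro i hi
        have hγi : γ i < 0 := (Finset.mem_filter.1 hi).2
        rw [hq]
        simp only
        rw [le_div_iff₀ (by linarith : (0:ℝ) < -γ i)]
        have := h i
        nlinarith
    · rintro ⟨h1, h2⟩ i
      rcases lt_or_gt_of_ne (hγne i) with hγi | hγi
      · have hi : i ∈ Neg := Finset.mem_filter.2 ⟨Finset.mem_univ i, hγi⟩
        have := le_trans h2 (Finset.inf'_le (q x) hi)
        rw [hq] at this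
        simp only at this
        rw [le_div_iff₀ (by linarith : (0:ℝ) < -γ i)] at this
        nlinarith
      · have hi : i ∈ Pos := Finset.mem_filter.2 ⟨Finset.mem_univ i, hγi⟩
        have := le_trans (Finset.le_sup' (q x) hi) h1
        rw [hq] at this
        simp only at this
        rw [div_le_iff_of_neg (by linarith : -γ i < 0)] at this
        nlinarith
  -- goodness is preserved along the line
  have hgood_shift : ∀ x (t : ℝ), x = ∑ i, β x i • a i →
      x + t • u = ∑ i, β (x + t • u) i • a i := by
    intro x t hgood
    have : x + t • u = ∑ i, (β x i + t * γ i) • a i := by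
      rw [Finset.sum_congr rfl (fun i _ => add_smul (β x i) (t * γ i) (a i)),
        Finset.sum_add_distrib]
      nth_rewrite 1 [hgood, hu]
      rw [Finset.smul_sum]
      congr 1
      exact Finset.sum_congr rfl (fun i _ => smul_smul t (γ i) (a i))
    calc x + t • u = ∑ i, (β x i + t * γ i) • a i := this
      _ = ∑ i, β (x + t • u) i • a i :=
          Finset.sum_congr rfl (fun i _ => by rw [hβshift])
  -- the key membership criterion on the line
  have hmemS : ∀ x, x = (∑ i, β x i • a i) → ∀ t : ℝ,
      (x + t • u ∈ S ↔ tmin x ≤ t ∧ t ≤ tmax x) := by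
    intro x hgood t
    rw [hSmem]
    constructor
    · rintro ⟨h0, -⟩
      rw [← hIff]
      intro i
      have := h0 i
      rwa [hβshift] at this
    · intro hb
      refine ⟨?_, hgood_shift x t hgood⟩
      intro i
      rw [hβshift]
      exact (hIff x t).2 hb i
  -- achieving indices
  have hach_max : ∀ x, ∃ i, β x i + tmax x * γ i = 0 ∧ γ i < 0 := by
    intro x
    obtain ⟨i, hi, hieq⟩ := Finset.exists_mem_eq_inf' hNeg (q x)
    have hγi : γ i < 0 := (Finset.mem_filter.1 hi).2
    refine ⟨i, ?_, hγi⟩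
    have hne : γ i ≠ 0 := hγne i
    have hqi : q x i * γ i = -β x i := by
      show β x i / -γ i * γ i = -β x i
      rw [div_neg, neg_mul, div_mul_cancel₀ _ hne]
    have htx : tmax x = q x i := hieq
    rw [htx, hqi]
    ring
  have hach_min : ∀ x, ∃ i, β x i + tmin x * γ i = 0 ∧ 0 < γ i := by
    intro x
    obtain ⟨i, hi, hieq⟩ := Finset.exists_mem_eq_sup' hPos (q x)
    have hγi : 0 < γ i := (Finset.mem_filter.1 hi).2
    refine ⟨i, ?_, hγi⟩
    have hne : γ i ≠ 0 := hγne i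
    have hqi : q x i * γ i = -β x i := by
      show β x i / -γ i * γ i = -β x i
      rw [div_neg, neg_mul, div_mul_cancel₀ _ hne]
    have htx : tmin x = q x i := hieq
    rw [htx, hqi]
    ring
  -- shifts of the bounds
  have hshift_min : ∀ x (s : ℝ), tmin (x + s • u) = tmin x - s := by
    intro x s
    show Pos.sup' hPos (q (x + s • u)) = Pos.sup' hPos (q x) - s
    have hcong : ∀ i ∈ Pos, q (x + s • u) i = q x i - s := by
      intro i hi
      have hne : γ i ≠ 0 := hγne i
      show β (x + s • u) i / -γ i = β x i / -γ i - s
      rw [hβshift, add_div, sub_eq_add_neg]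
      congr 1
      rw [div_neg, mul_div_cancel_right₀ _ hne]
    rw [Finset.sup'_congr hPos rfl hcong]
    exact stmt13_sup'_sub Pos hPos (q x) s
  have hshift_max : ∀ x (s : ℝ), tmax (x + s • u) = tmax x - s := by
    intro x s
    show Neg.inf' hNeg (q (x + s • u)) = Neg.inf' hNeg (q x) - s
    have hcong : ∀ i ∈ Neg, q (x + s • u) i = q x i - s := by
      intro i hi
      have hne : γ i ≠ 0 := hγne i
      show β (x + s • u) i / -γ i = β x i / -γ i - s
      rw [hβshift, add_div, sub_eq_add_neg]
      congr 1
      rw [div_neg, mul_div_cancel_right₀ _ hne]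
    rw [Finset.inf'_congr hNeg rfl hcong]
    exact stmt13_inf'_sub Neg hNeg (q x) s
  -- continuity
  have hcontφ : ∀ j, Continuous (φ j) := by
    intro j
    rw [hφ]
    exact (f j).continuous_of_finiteDimensional.comp (continuous_id.sub continuous_const)
  have hcontβ : ∀ i, Continuous (fun x => β x i) := by
    intro i
    induction i using Fin.cases with
    | zero =>
      simp only [hβ0]
      exact continuous_const.sub (continuous_finset_sum _ (fun j _ => hcontφ j))
    | succ j =>
      simp only [hβs]
      exact hcontφ j
  have hcontq : ∀ i, Continuous (fun x => q x i) := by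
    intro i
    rw [hq]
    simp only [div_eq_mul_inv]
    exact (hcontβ i).mul continuous_const
  have hconttmin : Continuous tmin := by
    rw [htmin]
    exact stmt13_cont_sup' Pos hPos (fun i x => q x i) hcontq
  have hconttmax : Continuous tmax := by
    rw [htmax]
    exact stmt13_cont_inf' Neg hNeg (fun i x => q x i) hcontq
  -- the map λ
  set lam : (Fin n → ℝ) → (Fin n → ℝ) := fun x => x + (tmin x + tmax x) • u with hlam
  have hcontlam : Continuous lam := by
    rw [hlam]
    exact continuous_id.add ((hconttmin.add hconttmax).smul continuous_const)
  -- cancellation along the line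
  have hcancel : ∀ (z : Fin n → ℝ) (s t : ℝ), z + s • u = z + t • u → s = t := by
    intro z s t h
    have h2 : (s - t) • u = 0 := by
      rw [sub_smul]
      have := add_left_cancel h
      rw [this, sub_self]
    rcases smul_eq_zero.1 h2 with h3 | h3
    · linarith [sub_eq_zero.1 h3]
    · exact absurd h3 hu0
  have hlamx : ∀ x, lam x = x + (tmin x + tmax x) • u := fun x => rfl
  have hcomb : ∀ (θ t : ℝ) (z : Fin n → ℝ),
      (1 - θ) • z + θ • (z + t • u) = z + (θ * t) • u := by
    intro θ t z
    rw [smul_add, sub_smul, one_smul, smul_smul]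
    abel
  have hbounds : ∀ x ∈ S, tmin x ≤ 0 ∧ 0 ≤ tmax x := by
    intro x hxS
    obtain ⟨h0x, -⟩ := (hSmem x).1 hxS
    rw [← hIff]
    intro i
    simpa using h0x i
  have hzero : ∀ x ∈ dS, tmin x = 0 ∨ tmax x = 0 := by
    intro x hx
    obtain ⟨hxS, i₀, hi₀⟩ := (hdSmem x).1 hx
    have hb := hbounds x hxS
    have hqi : q x i₀ = 0 := by
      show β x i₀ / -γ i₀ = 0
      rw [hi₀, zero_div]
    rcases lt_or_gt_of_ne (hγne i₀) with hγi | hγi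
    · right
      refine le_antisymm ?_ hb.2
      have hi : i₀ ∈ Neg := Finset.mem_filter.2 ⟨Finset.mem_univ _, hγi⟩
      have := Finset.inf'_le (q x) hi
      rw [hqi] at this
      exact this
    · left
      refine le_antisymm hb.1 ?_
      have hi : i₀ ∈ Pos := Finset.mem_filter.2 ⟨Finset.mem_univ _, hγi⟩
      have := Finset.le_sup' (q x) hi
      rw [hqi] at this
      exact this
  have hmain : ∀ x ∈ dS,
      lam x ∈ S ∧
      {y | ∃ t : ℝ, y = x + t • u} ∩ S = segment ℝ x (lam x) ∧
      (∀ y, {z | ∃ t : ℝ, z = x + t • u} ∩ S = segment ℝ x y → y = lam x) ∧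
      {y | ∃ t : ℝ, y = x + t • u} ∩ dS = {x, lam x} := by
    intro x hx
    have hxS : x ∈ S := ((hdSmem x).1 hx).1
    obtain ⟨h0x, hgoodx⟩ := (hSmem x).1 hxS
    have hb := hbounds x hxS
    have hz := hzero x hx
    have hsrange : tmin x ≤ tmin x + tmax x ∧ tmin x + tmax x ≤ tmax x := by
      rcases hz with h | h <;> constructor <;> linarith [hb.1, hb.2]
    have hlamS : lam x ∈ S := by
      rw [hlamx]
      exact (hmemS x hgoodx _).2 hsrange
    have hseg : {y | ∃ t : ℝ, y = x + t • u} ∩ S = segment ℝ x (lam x) := by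
      ext y
      rw [segment_eq_image]
      simp only [Set.mem_inter_iff, Set.mem_setOf_eq, Set.mem_image, Set.mem_Icc]
      constructor
      · rintro ⟨⟨t, rfl⟩, hyS⟩
        have htb : tmin x ≤ t ∧ t ≤ tmax x := (hmemS x hgoodx t).1 hyS
        by_cases hs0 : tmin x + tmax x = 0
        · have ht0 : t = 0 := by
            rcases hz with h | h <;> linarith [htb.1, htb.2]
          refine ⟨0, ⟨le_refl 0, by norm_num⟩, ?_⟩
          rw [hlamx, hcomb, ht0]
          norm_num
        · refine ⟨t / (tmin x + tmax x), ⟨?_, ?_⟩, ?_⟩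
          · rcases hz with h | h
            · have hs : 0 < tmin x + tmax x := by
                rcases lt_or_eq_of_le hb.2 with h3 | h3
                · linarith
                · exfalso; apply hs0; linarith
              exact div_nonneg (by linarith [htb.1]) (le_of_lt hs)
            · have hs : tmin x + tmax x < 0 := by
                rcases lt_or_eq_of_le hb.1 with h3 | h3
                · linarith
                · exfalso; apply hs0; linarith
              rw [← neg_div_neg_eq]
              exact div_nonneg (by linarith [htb.2]) (by linarith)
          · rcases hz with h | h
            · have hs : 0 < tmin x + tmax x := by
                rcases lt_or_eq_of_le hb.2 with h3 | h3
                · linarith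
                · exfalso; apply hs0; linarith
              rw [div_le_one hs]
              linarith [htb.2]
            · have hs : tmin x + tmax x < 0 := by
                rcases lt_or_eq_of_le hb.1 with h3 | h3
                · linarith
                · exfalso; apply hs0; linarith
              rw [div_le_iff_of_neg hs]
              linarith [htb.1]
          · rw [hlamx, hcomb, div_mul_cancel₀ _ hs0]
      · rintro ⟨θ, ⟨hθ0, hθ1⟩, rfl⟩
        have hval : (1 - θ) • x + θ • lam x = x + (θ * (tmin x + tmax x)) • u := by
          rw [hlamx, hcomb]
        rw [hval]
        refine ⟨⟨θ * (tmin x + tmax x), rfl⟩, (hmemS x hgoodx _).2 ⟨?_, ?_⟩⟩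
        · rcases hz with h | h
          · nlinarith [hb.2]
          · nlinarith [hb.1, hθ1]
        · rcases hz with h | h
          · nlinarith [hb.2, hθ1]
          · nlinarith [hb.1]
    refine ⟨hlamS, hseg, ?_, ?_⟩
    · -- uniqueness
      intro y hy
      have hy' : segment ℝ x y = segment ℝ x (lam x) := by rw [← hy, hseg]
      have hymem : y ∈ segment ℝ x (lam x) := by
        rw [← hy']; exact right_mem_segment ℝ x y
      have hlmem : lam x ∈ segment ℝ x y := by
        rw [hy']; exact right_mem_segment ℝ x (lam x)
      rw [segment_eq_image] at hymem hlmem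
      simp only [Set.mem_image, Set.mem_Icc] at hymem hlmem
      obtain ⟨θ₁, hθ₁, hy1⟩ := hymem
      obtain ⟨θ₂, hθ₂, hl2⟩ := hlmem
      have hyval : y = x + (θ₁ * (tmin x + tmax x)) • u := by
        rw [← hy1, hlamx, hcomb]
      have hlval : x + (tmin x + tmax x) • u = x + (θ₂ * (θ₁ * (tmin x + tmax x))) • u := by
        conv_lhs => rw [← hlamx, ← hl2, hyval, hcomb]
      have heq : tmin x + tmax x = θ₂ * (θ₁ * (tmin x + tmax x)) := hcancel x _ _ hlval
      have hts : θ₁ * (tmin x + tmax x) = tmin x + tmax x := by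
        rcases le_or_gt 0 (tmin x + tmax x) with hs | hs
        · have h1 : 0 ≤ θ₁ * (tmin x + tmax x) := mul_nonneg hθ₁.1 hs
          have h2 : θ₂ * (θ₁ * (tmin x + tmax x)) ≤ θ₁ * (tmin x + tmax x) := by
            nlinarith [hθ₂.2]
          apply le_antisymm
          · nlinarith [hθ₁.2]
          · linarith [heq, h2]
        · have h1 : θ₁ * (tmin x + tmax x) ≤ 0 := by nlinarith [hθ₁.1]
          have h2 : θ₁ * (tmin x + tmax x) ≤ θ₂ * (θ₁ * (tmin x + tmax x)) := by
            nlinarith [hθ₂.2]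
          apply le_antisymm
          · linarith [heq, h2]
          · nlinarith [hθ₁.2]
      rw [hyval, hts, ← hlamx]
    · -- the two intersection points with dS
      ext y
      simp only [Set.mem_inter_iff, Set.mem_setOf_eq, Set.mem_insert_iff,
        Set.mem_singleton_iff]
      constructor
      · rintro ⟨⟨t, rfl⟩, hydS⟩
        obtain ⟨hyS, i₁, hi₁⟩ := (hdSmem _).1 hydS
        have htb := (hmemS x hgoodx t).1 hyS
        rw [hβshift] at hi₁
        have hne : γ i₁ ≠ 0 := hγne i₁
        have ht : t = q x i₁ := by
          show t = β x i₁ / -γ i₁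
          rw [eq_div_iff (neg_ne_zero.2 hne)]
          linarith [hi₁]
        rcases lt_or_gt_of_ne hne with hγi | hγi
        · have hi : i₁ ∈ Neg := Finset.mem_filter.2 ⟨Finset.mem_univ _, hγi⟩
          have h1 : tmax x ≤ t := by rw [ht]; exact Finset.inf'_le (q x) hi
          have ht2 : t = tmax x := le_antisymm htb.2 h1
          rcases hz with h | h
          · right
            rw [hlamx, ht2, h, zero_add]
          · left
            rw [ht2, h, zero_smul, add_zero]
        · have hi : i₁ ∈ Pos := Finset.mem_filter.2 ⟨Finset.mem_univ _, hγi⟩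
          have h1 : t ≤ tmin x := by rw [ht]; exact Finset.le_sup' (q x) hi
          have ht2 : t = tmin x := le_antisymm h1 htb.1
          rcases hz with h | h
          · left
            rw [ht2, h, zero_smul, add_zero]
          · right
            rw [hlamx, ht2, h, add_zero]
      · rintro (rfl | rfl)
        · exact ⟨⟨0, by rw [zero_smul, add_zero]⟩, hx⟩
        · refine ⟨⟨tmin x + tmax x, hlamx x⟩, ?_⟩
          rw [hdSmem]
          refine ⟨hlamS, ?_⟩
          rcases hz with h | h
          · obtain ⟨i, hieq, -⟩ := hach_max x
            refine ⟨i, ?_⟩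
            rw [hlamx, hβshift, h, zero_add]
            exact hieq
          · obtain ⟨i, hieq, -⟩ := hach_min x
            refine ⟨i, ?_⟩
            rw [hlamx, hβshift, h, add_zero]
            exact hieq
  -- involution
  have hinv : ∀ x, lam (lam x) = x := by
    intro x
    have h1 : tmin (lam x) = tmin x - (tmin x + tmax x) := by
      rw [hlamx x]; exact hshift_min x _
    have h2 : tmax (lam x) = tmax x - (tmin x + tmax x) := by
      rw [hlamx x]; exact hshift_max x _
    rw [hlamx (lam x), h1, h2, hlamx x]
    have h3 : tmin x - (tmin x + tmax x) + (tmax x - (tmin x + tmax x))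
        = -(tmin x + tmax x) := by ring
    rw [h3, neg_smul]
    abel
  refine ⟨lam, hmain, hcontlam.continuousOn, fun x _ _ => hinv x, ?_⟩
  -- surjectivity of α
  apply Set.Subset.antisymm
  · rintro _ ⟨⟨t, x⟩, ⟨⟨ht0, ht1⟩, hxdS⟩, rfl⟩
    show (1 - t) • x + t • lam x ∈ S
    obtain ⟨hxS, -⟩ := (hdSmem x).1 hxdS
    obtain ⟨h0x, hgoodx⟩ := (hSmem x).1 hxS
    have hb := hbounds x hxS
    have hz := hzero x hxdS
    have hval : (1 - t) • x + t • lam x = x + (t * (tmin x + tmax x)) • u := by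
      rw [hlamx, hcomb]
    rw [hval]
    refine (hmemS x hgoodx _).2 ⟨?_, ?_⟩
    · rcases hz with h | h
      · nlinarith [hb.2]
      · nlinarith [hb.1, ht1]
    · rcases hz with h | h
      · nlinarith [hb.2, ht1]
      · nlinarith [hb.1]
  · intro y hyS
    obtain ⟨h0y, hgoody⟩ := (hSmem y).1 hyS
    have hb := hbounds y hyS
    have hxS : y + tmin y • u ∈ S :=
      (hmemS y hgoody _).2 ⟨le_refl _, le_trans hb.1 hb.2⟩
    have hxdS : y + tmin y • u ∈ dS := by
      rw [hdSmem]
      refine ⟨hxS, ?_⟩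
      obtain ⟨i, hieq, -⟩ := hach_min y
      exact ⟨i, by rw [hβshift]; exact hieq⟩
    have htminx : tmin (y + tmin y • u) = 0 := by rw [hshift_min]; ring
    have htmaxx : tmax (y + tmin y • u) = tmax y - tmin y := by rw [hshift_max]
    by_cases hs0 : tmax y - tmin y = 0
    · have h1 : tmin y = 0 := by linarith [hb.1, hb.2]
      refine ⟨(0, y + tmin y • u), ⟨⟨le_refl 0, by norm_num⟩, hxdS⟩, ?_⟩
      show (1 - 0) • (y + tmin y • u) + (0:ℝ) • lam (y + tmin y • u) = y
      simp [h1]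
    · refine ⟨((-(tmin y)) / (tmax y - tmin y), y + tmin y • u), ⟨⟨?_, ?_⟩, hxdS⟩, ?_⟩
      · apply div_nonneg (by linarith [hb.1])
        linarith [hb.1, hb.2]
      · rw [div_le_one (lt_of_le_of_ne (by linarith [hb.1, hb.2]) (Ne.symm hs0))]
        linarith [hb.2]
      · show (1 - (-(tmin y)) / (tmax y - tmin y)) • (y + tmin y • u)
            + ((-(tmin y)) / (tmax y - tmin y)) • lam (y + tmin y • u) = y
        rw [hlamx, hcomb, htminx, htmaxx, zero_add, div_mul_cancel₀ _ hs0, neg_smul]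
        abel
end
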